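/- arXiv:2505.21823 — 6 statements merged into one kernel-verified Lean document; each statement's English description precedes it below -/
import Mathlib

section
/- Let T be a finite ordered rooted tree with n vertices, and fix real numbers α₁, α₂ with α₂ ≠ 0. Consider the branching random walk on T where the displacement from a vertex v with c(v) children to its j-th child equals α₁ - (2/α₂)(c(v) - j). Then for every integer i with 0 ≤ i ≤ n-1, the spatial location R(i) of the (i+1)-st vertex in depth-first (lexicographic) order satisfies R(i) = α₁·H(i) - (2/α₂)·W(i), where H(i) is the height (depth) of the (i+1)-st vertex and W(i) = Σ_{j=1}^{i} (c(v_j) - 1) is the Łukasiewicz path of T. -/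
/-
Summing the displacements along the ancestral line of `u = v_{i+1}` gives `α₁ |u|` minus `2/α₂`
times `∑_k (c(u|k) - u_k)`, the number of siblings with a larger index of the vertices on that
line. So it suffices that this number equals `W(i) = ∑_{w < u} (c(w) - 1)`. Count the vertices
`x` whose parent precedes `u` in depth-first order: there are `∑_{w < u} c(w)` of them. Those
with `x < u` are the `#{w < u} - 1` non-root vertices before `u`; the others form the
depth-first stack at the moment `u` is visited, namely `u` itself and the siblings with a larger
index of `u` and of its ancestors. Hence `W(i) = #stack - 1`, which is the sum above.
-/

noncomputable section
open Classical

/-- An ordered rooted tree, encoded as a finite set of Ulam–Harris words: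
the root is `[]`, the tree is closed under taking prefixes (ancestors), the
children of a vertex `v` are `v ++ [j]` for `1 ≤ j ≤ c(v)` (closure under
taking younger→older siblings, and no child index `0`). -/
def IsOrderedTree (t : Finset (List ℕ)) : Prop :=
  [] ∈ t ∧
  (∀ v ∈ t, ∀ p : List ℕ, p <+: v → p ∈ t) ∧
  (∀ (v : List ℕ) (i j : ℕ), v ++ [i] ∈ t → 1 ≤ j → j ≤ i → v ++ [j] ∈ t) ∧
  (∀ v : List ℕ, v ++ [0] ∉ t)

/-- The number of children of the vertex `v` in the tree `t`. -/
def childCount (t : Finset (List ℕ)) (v : List ℕ) : ℕ :=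
  (t.filter (fun w => w.length = v.length + 1 ∧ v <+: w)).card

/-- The spatial location of a vertex `u` for the branching random walk in which
the displacement from a vertex `p` with `c(p)` children to its `j`-th child equals
`α₁ - (2/α₂) * (c(p) - j)`: the sum of these displacements along the ancestral
path from the root to `u`. -/
def spatialLoc (α₁ α₂ : ℝ) (t : Finset (List ℕ)) (u : List ℕ) : ℝ :=
  ∑ k ∈ Finset.range u.length,
    (α₁ - (2 / α₂) * ((childCount t (u.take k) : ℝ) - (u.getD k 0 : ℝ)))

namespace List

variable {α : Type*}

theorem append_singleton_injective (v : List α) : Function.Injective (v ++ [·]) :=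
  (append_right_injective v).comp singleton_injective

theorem isPrefix_or_forall_append_lt_of_lt [LT α] {p u : List α} (h : p < u) :
    p <+: u ∨ ∀ l, p ++ l < u := by
  induction h with
  | nil => exact .inl nil_prefix
  | @cons a l₁ l₂ _ ih =>
      rcases ih with ⟨s, rfl⟩ | ih
      · exact .inl ⟨s, rfl⟩
      · exact .inr fun l => Lex.cons (ih l)
  | rel hr => exact .inr fun _ => Lex.rel hr

variable [LinearOrder α]

-- Core's `List.IsPrefix.le` is about core's `≤` on lists, `¬ u < p`, not Mathlib's linear order.
theorem IsPrefix.le' {p u : List α} (h : p <+: u) : p ≤ u :=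
  not_lt.mp (show ¬u < p from h.le)

theorem IsPrefix.lt_of_ne {p u : List α} (h : p <+: u) (hne : p ≠ u) : p < u :=
  lt_of_le_of_ne h.le' hne

theorem dropLast_lt_self {x : List α} (hx : x ≠ []) : x.dropLast < x :=
  (dropLast_prefix x).lt_of_ne fun h => by
    have := congrArg length h
    simp only [length_dropLast] at this
    have := length_pos_iff.mpr hx
    omega

theorem take_append_singleton_lt {u : List α} {k : ℕ} (hk : k < u.length) {m : α}
    (hm : m < u[k]) : u.take k ++ [m] < u := by
  conv_rhs => rw [← take_append_drop k u, drop_eq_getElem_cons hk]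
  exact append_left_lt (Lex.rel hm)

theorem lt_take_append_singleton {u : List α} {k : ℕ} (hk : k < u.length) {m : α}
    (hm : u[k] < m) : u < u.take k ++ [m] := by
  conv_lhs => rw [← take_append_drop k u, drop_eq_getElem_cons hk]
  exact append_left_lt (Lex.rel hm)

theorem eq_or_exists_of_dropLast_lt_of_le {x u : List α} (hx : x ≠ []) (hlt : x.dropLast < u)
    (hle : u ≤ x) :
    x = u ∨ ∃ k, ∃ hk : k < u.length, x = u.take k ++ [x.getLast hx] ∧ u[k] < x.getLast hx := by
  have hx_eq := dropLast_append_getLast hx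
  rcases isPrefix_or_forall_append_lt_of_lt hlt with hpre | hall
  · set k := x.dropLast.length
    have htake : x.dropLast = u.take k := prefix_iff_eq_take.mp hpre
    have hk : k < u.length := by
      refine lt_of_le_of_ne hpre.length_le fun hk => hlt.ne ?_
      rw [htake, hk, take_length]
    rw [htake] at hx_eq
    rcases lt_trichotomy (x.getLast hx) u[k] with hlast | hlast | hlast
    · refine absurd hle (not_le.mpr ?_)
      exact hx_eq ▸ take_append_singleton_lt hk hlast
    · refine .inl (le_antisymm ?_ hle)
      rw [← hx_eq, hlast, take_append_getElem hk]
      exact (take_prefix _ u).le'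
    · exact .inr ⟨k, hk, hx_eq.symm, hlast⟩
  · exact absurd hle (not_le.mpr (hx_eq ▸ hall _))

end List

open Finset

theorem Finset.eq_Icc_one_card_of_forall_le_mem {s : Finset ℕ} (h0 : 0 ∉ s)
    (hcl : ∀ i ∈ s, ∀ j, 1 ≤ j → j ≤ i → j ∈ s) : s = Icc 1 #s := by
  rcases s.eq_empty_or_nonempty with rfl | hs
  · rfl
  have hmax : s = Icc 1 (s.max' hs) := by
    ext j
    rw [mem_Icc]
    exact ⟨fun hj => ⟨Nat.one_le_iff_ne_zero.mpr (ne_of_mem_of_not_mem hj h0), s.le_max' j hj⟩,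
      fun ⟨h1, h2⟩ => hcl _ (s.max'_mem hs) j h1 h2⟩
  have hcard : #s = s.max' hs := by
    conv_lhs => rw [hmax]
    simp
  rw [hcard]
  exact hmax

theorem childCount_eq_card_preimage (T : Finset (List ℕ)) (v : List ℕ) :
    childCount T v = #(T.preimage (v ++ [·]) (List.append_singleton_injective v).injOn) := by
  rw [childCount, ← card_image_of_injective _ (List.append_singleton_injective v),
    image_preimage]
  congr 1
  refine filter_congr fun w _ => ⟨?_, ?_⟩
  · rintro ⟨hlen, t, rfl⟩
    obtain ⟨m, rfl⟩ := List.length_eq_one_iff.mp (by simpa using hlen : t.length = 1)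
    exact ⟨m, rfl⟩
  · rintro ⟨m, rfl⟩
    exact ⟨by simp, m :: [], rfl⟩

namespace IsOrderedTree

variable {T : Finset (List ℕ)}

theorem take_mem (hT : IsOrderedTree T) {u : List ℕ} (hu : u ∈ T) (k : ℕ) : u.take k ∈ T :=
  hT.2.1 u hu _ (u.take_prefix k)

theorem append_singleton_mem_iff (hT : IsOrderedTree T) (v : List ℕ) (m : ℕ) :
    v ++ [m] ∈ T ↔ 1 ≤ m ∧ m ≤ childCount T v := by
  obtain ⟨-, -, hsib, hzero⟩ := hT
  rw [childCount_eq_card_preimage, ← mem_Icc, ← eq_Icc_one_card_of_forall_le_mem, mem_preimage]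
  · simpa using hzero v
  · simpa using fun i hi j => hsib v i j hi

theorem getElem_mem_Icc (hT : IsOrderedTree T) {u : List ℕ} (hu : u ∈ T) {k : ℕ}
    (hk : k < u.length) : 1 ≤ u[k] ∧ u[k] ≤ childCount T (u.take k) := by
  rw [← hT.append_singleton_mem_iff, List.take_append_getElem hk]
  exact hT.take_mem hu _

end IsOrderedTree

section DepthFirst

variable {T : Finset (List ℕ)}

theorem card_filter_dropLast_eq_sum_childCount (hpre : ∀ v ∈ T, ∀ p, p <+: v → p ∈ T)
    (P : List ℕ → Prop) [DecidablePred P] :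
    #{x ∈ T | x ≠ [] ∧ P x.dropLast} = ∑ w ∈ T with P w, childCount T w := by
  rw [card_eq_sum_card_fiberwise (f := List.dropLast) (t := {w ∈ T | P w})]
  · refine sum_congr rfl fun w hw => ?_
    rw [childCount, filter_filter]
    refine congrArg card (filter_congr fun x _ => ⟨?_, ?_⟩)
    · rintro ⟨⟨hx, -⟩, rfl⟩
      have := List.length_pos_iff.mpr hx
      exact ⟨by simp only [List.length_dropLast]; omega, x.dropLast_prefix⟩
    · rintro ⟨hlen, t, rfl⟩
      obtain ⟨a, rfl⟩ := List.length_eq_one_iff.mp (by simpa using hlen : t.length = 1)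
      simpa using (mem_filter.mp hw).2
  · intro x hx
    obtain ⟨hxT, -, hP⟩ := mem_filter.mp hx
    exact mem_filter.mpr ⟨hpre x hxT _ x.dropLast_prefix, hP⟩

-- The stack of the depth-first exploration of `T` at the moment `u` is visited.
def dfsStack (T : Finset (List ℕ)) (u : List ℕ) : Finset (List ℕ) :=
  {x ∈ T | x ≠ [] ∧ x.dropLast < u ∧ u ≤ x}

def laterSiblings (T : Finset (List ℕ)) (u : List ℕ) (k : ℕ) : Finset (List ℕ) :=
  (Ioc (u.getD k 0) (childCount T (u.take k))).image (u.take k ++ [·])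

theorem card_laterSiblings (T : Finset (List ℕ)) (u : List ℕ) (k : ℕ) :
    #(laterSiblings T u k) = childCount T (u.take k) - u.getD k 0 := by
  rw [laterSiblings, card_image_of_injective _ (List.append_singleton_injective _), Nat.card_Ioc]

theorem sum_childCount_sub_one_eq_card_dfsStack (hT : IsOrderedTree T) {u : List ℕ}
    (hu : u ≠ []) :
    ∑ w ∈ T with w < u, ((childCount T w : ℝ) - 1) = #(dfsStack T u) - 1 := by
  have hroot : [] ∈ {w ∈ T | w < u} := mem_filter.mpr ⟨hT.1, List.nil_prefix.lt_of_ne hu.symm⟩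
  have hsplit : #{x ∈ T | x ≠ [] ∧ x.dropLast < u} + 1 = #{w ∈ T | w < u} + #(dfsStack T u) := by
    rw [← card_filter_add_card_filter_not (fun x => x < u), filter_filter, filter_filter,
      ← card_erase_add_one hroot]
    have herase : {x ∈ T | (x ≠ [] ∧ x.dropLast < u) ∧ x < u} = {w ∈ T | w < u}.erase [] := by
      ext x
      simp only [mem_filter, mem_erase]
      exact ⟨fun ⟨hxT, ⟨hx, _⟩, hxu⟩ => ⟨hx, hxT, hxu⟩,
        fun ⟨hx, hxT, hxu⟩ => ⟨hxT, ⟨hx, (List.dropLast_lt_self hx).trans hxu⟩, hxu⟩⟩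
    have hstack : {x ∈ T | (x ≠ [] ∧ x.dropLast < u) ∧ ¬x < u} = dfsStack T u := by
      simp only [dfsStack, not_lt, and_assoc]
    rw [herase, hstack]
    ring
  rw [sum_sub_distrib, ← Nat.cast_sum, ← card_filter_dropLast_eq_sum_childCount hT.2.1,
    sum_const, nsmul_one]
  have hsplit_real := congrArg (Nat.cast : ℕ → ℝ) hsplit
  push_cast at hsplit_real
  linarith

theorem dfsStack_eq (hT : IsOrderedTree T) {u : List ℕ} (hu : u ∈ T) (hne : u ≠ []) :
    dfsStack T u = insert u ((range u.length).biUnion (laterSiblings T u)) := by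
  ext x
  simp only [dfsStack, laterSiblings, mem_filter, mem_insert, mem_biUnion, mem_range, mem_image,
    mem_Ioc]
  constructor
  · rintro ⟨hxT, hx, hlt, hle⟩
    rcases List.eq_or_exists_of_dropLast_lt_of_le hx hlt hle with rfl | ⟨k, hk, hxk, hlast⟩
    · exact .inl rfl
    · refine .inr ⟨k, hk, x.getLast hx, ⟨by rwa [List.getD_eq_getElem _ _ hk], ?_⟩, hxk.symm⟩
      exact ((hT.append_singleton_mem_iff _ _).mp (hxk ▸ hxT)).2
  · rintro (rfl | ⟨k, hk, m, ⟨hkm, hmc⟩, rfl⟩)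
    · exact ⟨hu, hne, List.dropLast_lt_self hne, le_rfl⟩
    · rw [List.getD_eq_getElem _ _ hk] at hkm
      refine ⟨(hT.append_singleton_mem_iff _ _).mpr
          ⟨(hT.getElem_mem_Icc hu hk).1.trans hkm.le, hmc⟩, by simp, ?_,
        (List.lt_take_append_singleton hk hkm).le⟩
      rw [List.dropLast_concat]
      exact (u.take_prefix k).lt_of_ne fun h => hk.not_ge (u.take_eq_self_iff.mp h)

theorem card_dfsStack (hT : IsOrderedTree T) {u : List ℕ} (hu : u ∈ T) (hne : u ≠ []) :
    #(dfsStack T u) = ∑ k ∈ range u.length, (childCount T (u.take k) - u.getD k 0) + 1 := by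
  have hmem : ∀ k < u.length, ∀ x ∈ laterSiblings T u k, x.length = k + 1 ∧ u < x := by
    intro k hk x hx
    obtain ⟨m, hm, rfl⟩ := mem_image.mp hx
    rw [List.getD_eq_getElem _ _ hk, mem_Ioc] at hm
    refine ⟨?_, List.lt_take_append_singleton hk hm.1⟩
    simp only [List.length_append, List.length_take, List.length_singleton]
    omega
  rw [dfsStack_eq hT hu hne, card_insert_of_notMem, card_biUnion]
  · simp only [card_laterSiblings]
  · intro k hk l hl hkl
    refine disjoint_left.mpr fun x hxk hxl => hkl ?_
    have := (hmem k (mem_range.mp hk) x hxk).1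
    have := (hmem l (mem_range.mp hl) x hxl).1
    omega
  · simp only [mem_biUnion, mem_range, not_exists, not_and]
    exact fun k hk hu' => lt_irrefl u (hmem k hk u hu').2

theorem sum_childCount_sub_one_filter_lt (hT : IsOrderedTree T) {u : List ℕ} (hu : u ∈ T) :
    ∑ w ∈ T with w < u, ((childCount T w : ℝ) - 1) =
      ∑ k ∈ range u.length, ((childCount T (u.take k) : ℝ) - u.getD k 0) := by
  rcases eq_or_ne u [] with rfl | hne
  · simp
  rw [sum_childCount_sub_one_eq_card_dfsStack hT hne, card_dfsStack hT hu hne, Nat.cast_add,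
    Nat.cast_one, add_sub_cancel_right, Nat.cast_sum]
  refine sum_congr rfl fun k hk => ?_
  have hk := mem_range.mp hk
  rw [Nat.cast_sub (List.getD_eq_getElem u 0 hk ▸ (hT.getElem_mem_Icc hu hk).2)]

end DepthFirst

theorem Finset.sum_range_sort_getD {α M : Type*} [LinearOrder α] [AddCommMonoid M]
    (s : Finset α) (d : α) {i : ℕ} (hi : i < #s) (f : α → M) :
    ∑ j ∈ range i, f ((s.sort (· ≤ ·)).getD j d) =
      ∑ x ∈ s with x < (s.sort (· ≤ ·)).getD i d, f x := by
  set L := s.sort (· ≤ ·)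
  have hlen : L.length = #s := by simp only [L, length_sort]
  have hsorted : L.SortedLT := sortedLT_sort s
  have himage : {x ∈ s | x < L.getD i d} = (range i).image (L.getD · d) := by
    ext x
    simp only [mem_filter, mem_image, mem_range]
    rw [L.getD_eq_getElem _ (hlen ▸ hi)]
    constructor
    · rintro ⟨hx, hxi⟩
      obtain ⟨j, hj, rfl⟩ := List.getElem_of_mem ((mem_sort (· ≤ ·)).mpr hx)
      exact ⟨j, hsorted.getElem_lt_getElem_iff.mp hxi, L.getD_eq_getElem _ hj⟩
    · rintro ⟨j, hj, rfl⟩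
      rw [L.getD_eq_getElem _ (by omega)]
      exact ⟨(mem_sort _).mp (L.getElem_mem _), hsorted.getElem_lt_getElem_iff.mpr hj⟩
  rw [himage, sum_image]
  intro j hj k hk hjk
  dsimp only at hjk
  rw [coe_range, Set.mem_Iio] at hj hk
  rwa [L.getD_eq_getElem _ (by omega), L.getD_eq_getElem _ (by omega),
    hsorted.nodup.getElem_inj_iff] at hjk

theorem stmt0_general (α₁ α₂ : ℝ)
    (T : Finset (List ℕ)) (hT : IsOrderedTree T) (n : ℕ) (hn : n = T.card) (hn0 : 0 < n)
    (L : List (List ℕ)) (hL : L = T.sort (· ≤ ·))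
    (i : ℕ) (hi : i ≤ n - 1) :
    spatialLoc α₁ α₂ T (L.getD i []) =
      α₁ * ((L.getD i []).length : ℝ) -
        (2 / α₂) * ∑ j ∈ Finset.range i, ((childCount T (L.getD j []) : ℝ) - 1) := by
  subst hL hn
  have hiT : i < #T := by omega
  have hu : (T.sort (· ≤ ·)).getD i [] ∈ T := by
    rw [List.getD_eq_getElem _ _ (by simpa using hiT)]
    exact (mem_sort _).mp (List.getElem_mem _)
  set u := (T.sort (· ≤ ·)).getD i []
  -- `convert` only reconciles the decidability instances of the two filters `{w ∈ T | w < u}`.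
  have hW : ∑ j ∈ range i, ((childCount T ((T.sort (· ≤ ·)).getD j []) : ℝ) - 1) =
      ∑ k ∈ range u.length, ((childCount T (u.take k) : ℝ) - u.getD k 0) :=
    (sum_range_sort_getD T [] hiT _).trans (by convert sum_childCount_sub_one_filter_lt hT hu)
  rw [hW, spatialLoc, sum_sub_distrib, sum_const, card_range, nsmul_eq_mul, mul_sum, mul_comm]

/-- **The head of the deterministic snake interpolates between the height process
and the Łukasiewicz path.**  For a finite ordered rooted tree `T` with `n` vertices
listed `v₁ < v₂ < ⋯ < vₙ` in depth-first (lexicographic) order, and displacements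
`α₁ - (2/α₂)(c(v) - j)`, the spatial location of `v_{i+1}` equals
`α₁ · H(i) - (2/α₂) · W(i)` where `H(i) = |v_{i+1}|` is the height process and
`W(i) = ∑_{j=1}^{i} (c(v_j) - 1)` is the Łukasiewicz path. -/
theorem stmt0 (α₁ α₂ : ℝ) (hα₂ : α₂ ≠ 0)
    (T : Finset (List ℕ)) (hT : IsOrderedTree T) (n : ℕ) (hn : n = T.card) (hn0 : 0 < n)
    (L : List (List ℕ)) (hL : L = T.sort (· ≤ ·))
    (i : ℕ) (hi : i ≤ n - 1) :
    spatialLoc α₁ α₂ T (L.getD i []) =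
      α₁ * ((L.getD i []).length : ℝ) -
        (2 / α₂) * ∑ j ∈ Finset.range i, ((childCount T (L.getD j []) : ℝ) - 1) :=
  stmt0_general α₁ α₂ T hT n hn hn0 L hL i hi
end
end

section
/- Let X₁, X₂, … be i.i.d. nonnegative random variables with E[X₁] = μ < ∞, and let (aₙ) be a sequence of positive reals with aₙ → ∞. Then almost surely, for every T > 0, sup_{0 ≤ t ≤ T} | (1/aₙ) Σ_{i=1}^{⌊aₙ t⌋} Xᵢ − μt | → 0 as n → ∞. -/
open MeasureTheory ProbabilityTheory Filter Topology Finset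

/-! By the strong law of large numbers, `Sₖ = μk + o(k)` almost surely, so for every `ε > 0`
there is `C` with `|Sₖ - μk| ≤ εk + C` for all `k`. Taking `k = ⌊aₙt⌋` loses at most `|μ|` in
the drift term, which bounds the error by `εT + (C + |μ|)/aₙ` uniformly in `t ∈ [0, T]`; since
`aₙ → ∞` the second term vanishes. -/

theorem exists_abs_sub_mul_le_of_tendsto_div {s : ℕ → ℝ} {μ : ℝ}
    (hlim : Tendsto (fun n : ℕ => s n / n) atTop (𝓝 μ)) {ε : ℝ} (hε : 0 < ε) :
    ∃ C, ∀ k : ℕ, |s k - μ * k| ≤ ε * k + C := by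
  obtain ⟨M, hM⟩ := eventually_atTop.1
    ((hlim.eventually (Metric.closedBall_mem_nhds μ hε)).and (eventually_gt_atTop 0))
  refine ⟨∑ k ∈ range M, |s k - μ * k|, fun k => ?_⟩
  have hC : 0 ≤ ∑ k ∈ range M, |s k - μ * k| := sum_nonneg fun _ _ => abs_nonneg _
  by_cases hk : M ≤ k
  · obtain ⟨hdist, hkpos⟩ := hM k hk
    have hk0 : (0 : ℝ) < k := Nat.cast_pos.2 hkpos
    have hdiv : |s k / k - μ| ≤ ε := by simpa [Metric.mem_closedBall, Real.dist_eq] using hdist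
    calc |s k - μ * k| = |s k / k - μ| * k := by
          rw [← abs_of_pos hk0, ← abs_mul, abs_of_pos hk0, sub_mul, div_mul_cancel₀ _ hk0.ne']
      _ ≤ ε * k := by gcongr
      _ ≤ ε * k + _ := le_add_of_nonneg_right hC
  · calc |s k - μ * k| ≤ ∑ k ∈ range M, |s k - μ * k| :=
          single_le_sum (f := fun k : ℕ => |s k - μ * k|) (fun _ _ => abs_nonneg _)
            (mem_range.2 (not_le.1 hk))
      _ ≤ ε * k + _ := le_add_of_nonneg_left (by positivity)

theorem abs_inv_mul_floor_sub_le {s : ℕ → ℝ} {μ ε C : ℝ}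
    (hC : ∀ k : ℕ, |s k - μ * k| ≤ ε * k + C) (hε : 0 ≤ ε) {a t : ℝ} (ha : 0 < a)
    (ht : 0 ≤ t) :
    |a⁻¹ * s ⌊a * t⌋₊ - μ * t| ≤ ε * t + (C + |μ|) / a := by
  set k := ⌊a * t⌋₊
  have hk : (k : ℝ) ≤ a * t := Nat.floor_le (by positivity)
  have hk' : a * t - k ≤ 1 := by linarith [Nat.lt_floor_add_one (a * t)]
  have hdrift : |μ * (a * t - k)| ≤ |μ| := by
    rw [abs_mul, abs_of_nonneg (sub_nonneg.2 hk)]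
    exact mul_le_of_le_one_right (abs_nonneg μ) hk'
  calc |a⁻¹ * s k - μ * t| = |(s k - μ * k) - μ * (a * t - k)| / a := by
        rw [eq_div_iff ha.ne', ← abs_of_pos ha, ← abs_mul, abs_of_pos ha]
        congr 1
        field_simp
        ring
    _ ≤ (ε * (a * t) + C + |μ|) / a := by
        gcongr
        calc _ ≤ |s k - μ * k| + |μ * (a * t - k)| := abs_sub _ _
          _ ≤ ε * k + C + |μ| := add_le_add (hC k) hdrift
          _ ≤ _ := by gcongr
    _ = ε * t + (C + |μ|) / a := by field_simp; ring

theorem tendsto_iSup_abs_inv_mul_floor_sub {s : ℕ → ℝ} {μ : ℝ}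
    (hlim : Tendsto (fun n : ℕ => s n / n) atTop (𝓝 μ))
    {a : ℕ → ℝ} (hatop : Tendsto a atTop atTop) (T : ℝ) :
    Tendsto (fun n : ℕ => ⨆ t : Set.Icc (0 : ℝ) T, |(a n)⁻¹ * s ⌊a n * t⌋₊ - μ * t|)
      atTop (𝓝 0) := by
  refine tendsto_order.2 ⟨fun b hb => Eventually.of_forall fun n =>
    hb.trans_le (Real.iSup_nonneg fun _ => abs_nonneg _), fun ε hε => ?_⟩
  set δ := ε / (2 * (|T| + 1))
  have hδ : 0 < δ := by positivity
  have hδT : δ * |T| < ε / 2 := by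
    rw [div_mul_eq_mul_div, div_lt_div_iff₀ (by positivity) two_pos]
    nlinarith [abs_nonneg T]
  obtain ⟨C, hC⟩ := exists_abs_sub_mul_le_of_tendsto_div hlim hδ
  have hC0 : 0 ≤ C := (abs_nonneg _).trans (by simpa using hC 0)
  have hdecay : Tendsto (fun n => (C + |μ|) / a n) atTop (𝓝 0) :=
    tendsto_const_nhds.div_atTop hatop
  filter_upwards [hatop.eventually_gt_atTop 0,
    hdecay.eventually (gt_mem_nhds (half_pos hε))] with n hn hsmall
  refine (Real.iSup_le (fun t => ?_) (by positivity)).trans_lt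
    (show δ * |T| + (C + |μ|) / a n < ε by linarith)
  obtain ⟨t, ht0, htT⟩ := t
  calc _ ≤ δ * t + (C + |μ|) / a n := abs_inv_mul_floor_sub_le hC hδ.le hn ht0
    _ ≤ δ * |T| + (C + |μ|) / a n := by gcongr; exact htT.trans (le_abs_self T)

theorem stmt7_general {Ω : Type*} [MeasurableSpace Ω] (P : Measure Ω)
    (X : ℕ → Ω → ℝ)
    (hindep : iIndepFun X P)
    (hident : ∀ i, IdentDistrib (X i) (X 0) P P)
    (hint : Integrable (X 0) P) (μv : ℝ) (hμ : ∫ ω, X 0 ω ∂P = μv)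
    (a : ℕ → ℝ) (hatop : Tendsto a atTop atTop) :
    ∀ᵐ ω ∂P, ∀ T : ℝ, 0 < T →
      Tendsto (fun n : ℕ => ⨆ t : Set.Icc (0 : ℝ) T,
          |(a n)⁻¹ * ∑ i ∈ Finset.range ⌊a n * (t : ℝ)⌋₊, X i ω - μv * (t : ℝ)|)
        atTop (nhds 0) := by
  filter_upwards [strong_law_ae_real X hint (fun _ _ hij => hindep.indepFun hij) hident]
    with ω hω T _
  rw [hμ] at hω
  exact tendsto_iSup_abs_inv_mul_floor_sub hω hatop T

/-- **Functional strong law of large numbers.**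
If `X₁, X₂, …` are i.i.d. nonnegative random variables with finite mean `μv` and
`aₙ → ∞` is a sequence of positive reals, then almost surely, for every `T > 0`,
`sup_{0 ≤ t ≤ T} |(1/aₙ) ∑_{i ≤ ⌊aₙ t⌋} Xᵢ − μv·t| → 0` as `n → ∞`. -/
theorem stmt7 {Ω : Type*} [MeasurableSpace Ω] (P : Measure Ω) [IsProbabilityMeasure P]
    (X : ℕ → Ω → ℝ) (hmeas : ∀ i, Measurable (X i))
    (hindep : iIndepFun X P)
    (hident : ∀ i, IdentDistrib (X i) (X 0) P P)
    (hpos : ∀ i ω, 0 ≤ X i ω)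
    (hint : Integrable (X 0) P) (μv : ℝ) (hμ : ∫ ω, X 0 ω ∂P = μv)
    (a : ℕ → ℝ) (ha : ∀ n, 0 < a n) (hatop : Tendsto a atTop atTop) :
    ∀ᵐ ω ∂P, ∀ T : ℝ, 0 < T →
      Tendsto (fun n : ℕ => ⨆ t : Set.Icc (0 : ℝ) T,
          |(a n)⁻¹ * ∑ i ∈ Finset.range ⌊a n * (t : ℝ)⌋₊, X i ω - μv * (t : ℝ)|)
        atTop (nhds 0) :=
  stmt7_general P X hindep hident hint μv hμ a hatop
end

section
/- Let X be a random variable taking values in the positive integers with E[X] > 0 and E[X³] < ∞. Let (E_n)_{n≥1} be events with P(E_n) = 1 − O(1/n). Let X_n be distributed as X conditioned on E_n, let X̄_n have the size-biased law of X_n, and let X̄ have the size-biased law of X. Then the total variation distance satisfies d_TV(X̄_n, X̄) = (1/2)·Σ_{k≥1} |P(X̄_n = k) − P(X̄ = k)| = O(n^{−2/3}). -/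
/-!
Write `μ = E[X]` and split it as `μ = E[X; Eₙ] + E[X; Eₙᶜ]`. The two size-biased pmfs are
`k P(X = k, Eₙ) / E[X; Eₙ]` and `k P(X = k) / μ`, whose numerators differ termwise by a
nonnegative amount of total mass `E[X; Eₙᶜ]`; this makes their total variation distance at most
`2 E[X; Eₙᶜ] / μ`. Splitting `X` at the level `M = n^{1/3}` gives
`E[X; Eₙᶜ] ≤ M P(Eₙᶜ) + E[X³] / M² = O(n^{-2/3})`.
-/

open MeasureTheory Filter

section SummableBounds

lemma tsum_le_of_le_of_hasSum {u v : ℕ → ℝ} {s : ℝ} (hu : ∀ k, 0 ≤ u k) (huv : ∀ k, u k ≤ v k)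
    (hv : HasSum v s) : ∑' k, u k ≤ s :=
  hv.tsum_eq ▸ (Summable.of_nonneg_of_le hu huv hv.summable).tsum_le_tsum huv hv.summable

variable {f g : ℕ → ℝ} {a b : ℝ}

lemma half_tsum_abs_div_sub_div_le_one (hf : HasSum f a) (hg : HasSum g b) (hf0 : ∀ k, 0 ≤ f k)
    (hfg : ∀ k, f k ≤ g k) (hb : 0 < b) :
    (1 / 2) * ∑' k, |f k / a - g k / b| ≤ 1 := by
  have ha : 0 ≤ a := hf.nonneg hf0
  have hg0 (k : ℕ) : 0 ≤ g k := (hf0 k).trans (hfg k)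
  have hsum : ∑' k, |f k / a - g k / b| ≤ a / a + b / b := by
    refine tsum_le_of_le_of_hasSum (fun _ => abs_nonneg _) (fun k => ?_)
      ((hf.div_const a).add (hg.div_const b))
    have : 0 ≤ f k / a := div_nonneg (hf0 k) ha
    have : 0 ≤ g k / b := div_nonneg (hg0 k) hb.le
    exact abs_le.mpr ⟨by linarith, by linarith⟩
  have : a / a ≤ 1 := div_self_le_one a
  rw [div_self hb.ne'] at hsum
  linarith

lemma half_tsum_abs_div_sub_div_le_of_half_le (hf : HasSum f a) (hg : HasSum g b)
    (hfg : ∀ k, f k ≤ g k) (hg0 : ∀ k, 0 ≤ g k) (hb : 0 < b) (hab : b / 2 ≤ a) :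
    (1 / 2) * ∑' k, |f k / a - g k / b| ≤ 2 * (b - a) / b := by
  have ha : 0 < a := by linarith
  have hba : 0 ≤ b - a := by linarith [hasSum_le hfg hf hg]
  have hsum : ∑' k, |f k / a - g k / b| ≤ (b - a) / a + b * ((b - a) / (a * b)) := by
    refine tsum_le_of_le_of_hasSum (fun _ => abs_nonneg _) (fun k => ?_)
      (((hg.sub hf).div_const a).add (hg.mul_right _))
    have hid : f k / a - g k / b = -((g k - f k) / a) + g k * ((b - a) / (a * b)) := by
      field_simp
      ring
    have : 0 ≤ (g k - f k) / a := div_nonneg (by linarith [hfg k]) ha.le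
    have : 0 ≤ g k * ((b - a) / (a * b)) := by have := hg0 k; positivity
    rw [hid]
    exact abs_le.mpr ⟨by linarith, by linarith⟩
  have hval : (b - a) / a + b * ((b - a) / (a * b)) = 2 * ((b - a) / a) := by
    field_simp
    ring
  have hfin : (b - a) / a ≤ 2 * (b - a) / b := by
    rw [div_le_div_iff₀ ha hb]
    nlinarith
  linarith

lemma half_tsum_abs_div_sub_div_le (hf : HasSum f a) (hg : HasSum g b) (hf0 : ∀ k, 0 ≤ f k)
    (hfg : ∀ k, f k ≤ g k) (hb : 0 < b) :
    (1 / 2) * ∑' k, |f k / a - g k / b| ≤ 2 * (b - a) / b := by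
  rcases le_or_gt (b / 2) a with hab | hab
  · exact half_tsum_abs_div_sub_div_le_of_half_le hf hg hfg (fun k => (hf0 k).trans (hfg k)) hb hab
  · refine (half_tsum_abs_div_sub_div_le_one hf hg hf0 hfg hb).trans ?_
    rw [le_div_iff₀ hb]
    linarith

end SummableBounds

section Moments

variable {Ω : Type*} [MeasurableSpace Ω] {P : Measure Ω}

lemma integrable_natCast_of_integrable_pow {X : Ω → ℕ} (hX : Measurable X) {m : ℕ} (hm : m ≠ 0)
    (h : Integrable (fun ω => (X ω : ℝ) ^ m) P) : Integrable (fun ω => (X ω : ℝ)) P := by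
  refine h.mono (measurable_from_top.comp hX).aestronglyMeasurable (Eventually.of_forall fun ω => ?_)
  simp only [Real.norm_natCast, norm_pow]
  exact_mod_cast Nat.le_self_pow hm (X ω)

lemma hasSum_natCast_mul_measureReal_inter {X : Ω → ℕ} (hX : Measurable X)
    (hXi : Integrable (fun ω => (X ω : ℝ)) P) (A : Set Ω) :
    HasSum (fun k : ℕ => (k : ℝ) * P.real ({ω | X ω = k} ∩ A)) (∫ ω in A, (X ω : ℝ) ∂P) := by
  set ν := (P.restrict A).map X
  have hcast : Measurable (fun k : ℕ => (k : ℝ)) := measurable_from_top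
  have hνk (k : ℕ) : ν {k} = P ({ω | X ω = k} ∩ A) := by
    rw [Measure.map_apply hX (measurableSet_singleton k),
      Measure.restrict_apply (hX (measurableSet_singleton k))]
    rfl
  have hint : Integrable (fun k : ℕ => (k : ℝ)) (Measure.sum fun k => ν {k} • Measure.dirac k) := by
    rw [Measure.sum_smul_dirac, integrable_map_measure hcast.aestronglyMeasurable hX.aemeasurable]
    exact hXi.restrict
  have hterms : (fun k : ℕ => (k : ℝ) * P.real ({ω | X ω = k} ∩ A))
      = fun k => ∫ x, (x : ℝ) ∂(ν {k} • Measure.dirac k) := by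
    ext k
    rw [integral_smul_measure, integral_dirac, hνk, smul_eq_mul, mul_comm, measureReal_def]
  have htotal : ∫ ω in A, (X ω : ℝ) ∂P
      = ∫ x, (x : ℝ) ∂(Measure.sum fun k => ν {k} • Measure.dirac k) := by
    rw [Measure.sum_smul_dirac, integral_map hX.aemeasurable hcast.aestronglyMeasurable]
  rw [hterms, htotal]
  exact hasSum_integral_measure hint

variable [IsFiniteMeasure P]

lemma setIntegral_le_measureReal_mul_add_integral_pow_three_div {Y : Ω → ℝ} (hY : 0 ≤ Y)
    (h3 : Integrable (fun ω => Y ω ^ 3) P) (A : Set Ω) {M : ℝ} (hM : 0 < M) :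
    ∫ ω in A, Y ω ∂P ≤ P.real A * M + (∫ ω, Y ω ^ 3 ∂P) / M ^ 2 := by
  have hpt (ω : Ω) : Y ω ≤ M + Y ω ^ 3 / M ^ 2 := by
    have hy := hY ω
    rcases le_or_gt (Y ω) M with h | h
    · have : 0 ≤ Y ω ^ 3 / M ^ 2 := div_nonneg (pow_nonneg hy 3) (sq_nonneg M)
      linarith
    · have : Y ω ≤ Y ω ^ 3 / M ^ 2 := by
        rw [le_div_iff₀ (by positivity)]
        nlinarith [mul_lt_mul'' h h hM.le hM.le]
      linarith
  have hint : Integrable (fun ω => Y ω ^ 3 / M ^ 2) (P.restrict A) := (h3.div_const _).restrict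
  calc ∫ ω in A, Y ω ∂P ≤ ∫ ω in A, (M + Y ω ^ 3 / M ^ 2) ∂P :=
        integral_mono_of_nonneg (Eventually.of_forall fun ω => hY ω)
          ((integrable_const M).add hint) (Eventually.of_forall hpt)
    _ = P.real A * M + (∫ ω in A, Y ω ^ 3 ∂P) / M ^ 2 := by
        rw [integral_add (integrable_const M) hint, setIntegral_const, integral_div, smul_eq_mul]
    _ ≤ P.real A * M + (∫ ω, Y ω ^ 3 ∂P) / M ^ 2 := by
        gcongr _ + ?_ / _
        exact setIntegral_le_integral h3 (Eventually.of_forall fun ω => pow_nonneg (hY ω) 3)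

/-- The truncation level `M = t^{1/3}` balances the two terms of the previous bound. -/
lemma setIntegral_le_mul_rpow_neg_two_thirds {Y : Ω → ℝ} (hY : 0 ≤ Y)
    (h3 : Integrable (fun ω => Y ω ^ 3) P) {A : Set Ω} {C₀ t : ℝ} (ht : 0 < t)
    (hA : P.real A ≤ C₀ / t) :
    ∫ ω in A, Y ω ∂P ≤ (C₀ + ∫ ω, Y ω ^ 3 ∂P) * t ^ (-(2 / 3) : ℝ) := by
  set M := t ^ ((1 : ℝ) / 3)
  have hM : 0 < M := Real.rpow_pos_of_pos ht _
  have hlin : M / t = t ^ (-(2 / 3) : ℝ) := by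
    rw [div_eq_mul_inv, ← Real.rpow_neg_one t, ← Real.rpow_add ht]
    norm_num
  have hsq : (M ^ 2)⁻¹ = t ^ (-(2 / 3) : ℝ) := by
    rw [← Real.rpow_natCast, ← Real.rpow_mul ht.le, ← Real.rpow_neg ht.le]
    norm_num
  calc ∫ ω in A, Y ω ∂P ≤ P.real A * M + (∫ ω, Y ω ^ 3 ∂P) / M ^ 2 :=
        setIntegral_le_measureReal_mul_add_integral_pow_three_div hY h3 A hM
    _ ≤ C₀ / t * M + (∫ ω, Y ω ^ 3 ∂P) / M ^ 2 := by gcongr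
    _ = (C₀ + ∫ ω, Y ω ^ 3 ∂P) * t ^ (-(2 / 3) : ℝ) := by
        rw [div_mul_comm, mul_comm, hlin, div_eq_mul_inv _ (M ^ 2), hsq]
        ring

end Moments

theorem stmt9_general {Ω : Type*} [MeasurableSpace Ω] (P : Measure Ω) [IsProbabilityMeasure P]
    (X : Ω → ℕ) (hX : Measurable X)
    (hEX : 0 < ∫ ω, (X ω : ℝ) ∂P)
    (h3 : Integrable (fun ω => (X ω : ℝ) ^ 3) P)
    (E : ℕ → Set Ω) (hEmeas : ∀ n, MeasurableSet (E n))
    (C₀ : ℝ) (hE : ∀ n : ℕ, 1 ≤ n → (P (E n)ᶜ).toReal ≤ C₀ / n) :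
    ∃ C : ℝ, ∀ n : ℕ, 1 ≤ n →
      (1 / 2) * ∑' k : ℕ,
          |(k : ℝ) * (P ({ω | X ω = k} ∩ E n)).toReal / (∫ ω in E n, (X ω : ℝ) ∂P)
            - (k : ℝ) * (P {ω | X ω = k}).toReal / (∫ ω, (X ω : ℝ) ∂P)|
        ≤ C * (n : ℝ) ^ (-(2 / 3) : ℝ) := by
  have hXi := integrable_natCast_of_integrable_pow hX three_ne_zero h3
  refine ⟨2 * (C₀ + ∫ ω, (X ω : ℝ) ^ 3 ∂P) / ∫ ω, (X ω : ℝ) ∂P, fun n hn => ?_⟩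
  have hg := hasSum_natCast_mul_measureReal_inter hX hXi Set.univ
  simp only [Set.inter_univ, Measure.restrict_univ] at hg
  calc _ ≤ 2 * ((∫ ω, (X ω : ℝ) ∂P) - ∫ ω in E n, (X ω : ℝ) ∂P) / ∫ ω, (X ω : ℝ) ∂P :=
        half_tsum_abs_div_sub_div_le (hasSum_natCast_mul_measureReal_inter hX hXi (E n)) hg
          (fun k => by positivity)
          (fun k => by gcongr; exacts [measure_ne_top P _, Set.inter_subset_left]) hEX
    _ = 2 * (∫ ω in (E n)ᶜ, (X ω : ℝ) ∂P) / ∫ ω, (X ω : ℝ) ∂P := by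
        rw [← integral_add_compl (hEmeas n) hXi, add_sub_cancel_left]
    _ ≤ 2 * ((C₀ + ∫ ω, (X ω : ℝ) ^ 3 ∂P) * (n : ℝ) ^ (-(2 / 3) : ℝ)) / ∫ ω, (X ω : ℝ) ∂P := by
        gcongr
        exact setIntegral_le_mul_rpow_neg_two_thirds (fun ω => Nat.cast_nonneg _) h3
          (Nat.cast_pos.mpr hn) (hE n hn)
    _ = _ := by ring

/-- **Total variation stability of size-biasing under conditioning.**
Let `X` be a positive-integer-valued random variable with `E[X] > 0` and
`E[X³] < ∞`, and let `(Eₙ)` be events with `P(Eₙ) = 1 − O(1/n)`.  Let `X̄ₙ` have the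
size-biased law of `X` conditioned on `Eₙ` (pmf `k ↦ k·P(X = k, Eₙ)/E[X·1_{Eₙ}]`)
and `X̄` the size-biased law of `X` (pmf `k ↦ k·P(X = k)/E[X]`).  Then
`d_TV(X̄ₙ, X̄) = (1/2)∑_{k≥1}|P(X̄ₙ=k) − P(X̄=k)| = O(n^{−2/3})`. -/
theorem stmt9 {Ω : Type*} [MeasurableSpace Ω] (P : Measure Ω) [IsProbabilityMeasure P]
    (X : Ω → ℕ) (hX : Measurable X) (hpos : ∀ ω, 1 ≤ X ω)
    (hEX : 0 < ∫ ω, (X ω : ℝ) ∂P)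
    (h3 : Integrable (fun ω => (X ω : ℝ) ^ 3) P)
    (E : ℕ → Set Ω) (hEmeas : ∀ n, MeasurableSet (E n))
    (C₀ : ℝ) (hE : ∀ n : ℕ, 1 ≤ n → (P (E n)ᶜ).toReal ≤ C₀ / n) :
    ∃ C : ℝ, ∀ n : ℕ, 1 ≤ n →
      (1 / 2) * ∑' k : ℕ,
          |(k : ℝ) * (P ({ω | X ω = k} ∩ E n)).toReal / (∫ ω in E n, (X ω : ℝ) ∂P)
            - (k : ℝ) * (P {ω | X ω = k}).toReal / (∫ ω, (X ω : ℝ) ∂P)|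
        ≤ C * (n : ℝ) ^ (-(2 / 3) : ℝ) :=
  stmt9_general P X hX hEX h3 E hEmeas C₀ hE
end

section
/- Let ξ̄₁, ξ̄₂, … be i.i.d. positive-integer-valued random variables with E[ξ̄₁] = 1 + σ² for some σ² > 0, and let t > 0. Then as n → ∞, ∏_{i=1}^{⌊t√n⌋} ((n − i + 1)/(n − 1 − Σ_{j=1}^{i−1} ξ̄_j)) converges in probability to exp(t²σ²/2). -/
/-!
Write `S k = ξ̄₁ + ⋯ + ξ̄ₖ`. The `(k+1)`-st factor is `1 + xₖ` with
`xₖ = (S k - k + 1) / (n - 1 - S k) ≥ 0`, and every `xₖ` is at most of order `S m / n → 0`,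
where `m = ⌊t√n⌋`. Since `exp (x / (1 + M)) ≤ 1 + x ≤ exp x` for `0 ≤ x ≤ M`, the product is
squeezed between exponentials of `∑ xₖ` up to a factor `1 + o(1)`. On the almost sure event
of the strong law, `S k - k + 1 = σ² k + o(k)`, so
`∑_{k<m} xₖ ∼ (1/n) ∑_{k<m} σ² k ∼ σ² m² / (2n) → σ² t² / 2`.
Almost sure convergence then gives convergence in probability.
-/

open MeasureTheory ProbabilityTheory Filter Finset Topology Real

lemma exp_div_one_add_le_one_add {x M : ℝ} (hx : 0 ≤ x) (hxM : x ≤ M) :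
    exp (x / (1 + M)) ≤ 1 + x := by
  have h1x : 0 < 1 + x := by linarith
  calc exp (x / (1 + M)) ≤ exp (1 - (1 + x)⁻¹) := by
        gcongr
        calc x / (1 + M) ≤ x / (1 + x) := div_le_div_of_nonneg_left hx h1x (by linarith)
          _ = 1 - (1 + x)⁻¹ := by field_simp; ring
    _ ≤ exp (log (1 + x)) := exp_le_exp.2 (one_sub_inv_le_log_of_pos h1x)
    _ = 1 + x := exp_log h1x

lemma exp_sum_div_one_add_le_prod_one_add {ι : Type*} (s : Finset ι) {x : ι → ℝ} {M : ℝ}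
    (hx : ∀ i ∈ s, 0 ≤ x i ∧ x i ≤ M) :
    exp ((∑ i ∈ s, x i) / (1 + M)) ≤ ∏ i ∈ s, (1 + x i) := by
  rw [sum_div, exp_sum]
  exact prod_le_prod (fun i _ => (exp_pos _).le)
    fun i hi => exp_div_one_add_le_one_add (hx i hi).1 (hx i hi).2

lemma prod_one_add_le_exp_sum_of_nonneg {ι : Type*} (s : Finset ι) {x : ι → ℝ}
    (hx : ∀ i ∈ s, 0 ≤ x i) : ∏ i ∈ s, (1 + x i) ≤ exp (∑ i ∈ s, x i) := by
  rw [exp_sum]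
  exact prod_le_prod (fun i hi => by linarith [hx i hi])
    fun i _ => by linarith [add_one_le_exp (x i)]

theorem tendsto_prod_one_add_of_tendsto_sum {ι α : Type*} {l : Filter α} {s : α → Finset ι}
    {x : α → ι → ℝ} {M : α → ℝ} {L : ℝ} (hx : ∀ᶠ a in l, ∀ i ∈ s a, 0 ≤ x a i ∧ x a i ≤ M a)
    (hM : Tendsto M l (𝓝 0)) (hsum : Tendsto (fun a => ∑ i ∈ s a, x a i) l (𝓝 L)) :
    Tendsto (fun a => ∏ i ∈ s a, (1 + x a i)) l (𝓝 (exp L)) := by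
  have hlow : Tendsto (fun a => exp ((∑ i ∈ s a, x a i) / (1 + M a))) l (𝓝 (exp L)) := by
    simpa using (hsum.div (tendsto_const_nhds.add hM) (by norm_num : (1 : ℝ) + 0 ≠ 0)).rexp
  refine tendsto_of_tendsto_of_tendsto_of_le_of_le' hlow hsum.rexp ?_ ?_
  · filter_upwards [hx] with a ha using exp_sum_div_one_add_le_prod_one_add _ ha
  · filter_upwards [hx] with a ha using prod_one_add_le_exp_sum_of_nonneg _ fun i hi => (ha i hi).1

lemma sum_range_natCast_mul_two (m : ℕ) : (∑ k ∈ range m, (k : ℝ)) * 2 = m * (m - 1) := by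
  induction m with
  | zero => simp
  | succ m ih => rw [sum_range_succ, add_mul, ih]; push_cast; ring

theorem tendsto_sum_range_natCast_div_sq :
    Tendsto (fun m : ℕ => (∑ k ∈ range m, (k : ℝ)) / (m : ℝ) ^ 2) atTop (𝓝 (1 / 2)) := by
  have h : Tendsto (fun m : ℕ => (1 - (m : ℝ)⁻¹) / 2) atTop (𝓝 ((1 - 0) / 2)) :=
    (tendsto_const_nhds.sub tendsto_inv_atTop_nhds_zero_nat).div_const 2
  rw [sub_zero] at h
  refine h.congr' ?_
  filter_upwards [eventually_ne_atTop 0] with m hm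
  have hm' : (m : ℝ) ≠ 0 := Nat.cast_ne_zero.2 hm
  field_simp
  linarith [sum_range_natCast_mul_two m]

theorem tendsto_sum_range_div_sq {f : ℕ → ℝ} {c : ℝ}
    (hf : Tendsto (fun k : ℕ => f k / k) atTop (𝓝 c)) :
    Tendsto (fun m : ℕ => (∑ k ∈ range m, f k) / (m : ℝ) ^ 2) atTop (𝓝 (c / 2)) := by
  have hsmall : (fun k : ℕ => f k - c * k) =o[atTop] fun k : ℕ => (k : ℝ) := by
    rw [Asymptotics.isLittleO_iff_tendsto' (by
      filter_upwards [eventually_ne_atTop 0] with k hk h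
      exact absurd h (Nat.cast_ne_zero.2 hk))]
    have := hf.sub_const c
    rw [sub_self] at this
    refine this.congr' ?_
    filter_upwards [eventually_ne_atTop 0] with k hk
    field_simp
  have hsq : Tendsto (fun m : ℕ => (m : ℝ) ^ 2) atTop atTop :=
    (tendsto_pow_atTop two_ne_zero).comp tendsto_natCast_atTop_atTop
  have hid_top : Tendsto (fun m : ℕ => ∑ k ∈ range m, (k : ℝ)) atTop atTop := by
    refine (tendsto_sum_range_natCast_div_sq.pos_mul_atTop one_half_pos hsq).congr' ?_
    filter_upwards [eventually_ne_atTop 0] with m hm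
    field_simp
  have hidO : (fun m : ℕ => ∑ k ∈ range m, (k : ℝ)) =O[atTop] fun m : ℕ => (m : ℝ) ^ 2 :=
    Asymptotics.isBigO_of_div_tendsto_nhds (by
      filter_upwards [eventually_ne_atTop 0] with m hm h
      exact absurd h (pow_ne_zero 2 (Nat.cast_ne_zero.2 hm))) _ tendsto_sum_range_natCast_div_sq
  have herr :=
    ((hsmall.sum_range (fun k => k.cast_nonneg) hid_top).trans_isBigO hidO).tendsto_div_nhds_zero
  have := herr.add (tendsto_sum_range_natCast_div_sq.const_mul c)
  rw [zero_add, mul_one_div] at this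
  refine this.congr fun m => ?_
  rw [sum_sub_distrib, ← mul_sum]
  ring

theorem tendsto_prod_one_add_div {ι α : Type*} {l : Filter α} {s : α → Finset ι}
    {y d : α → ι → ℝ} {n δ : α → ℝ} {L : ℝ} (hn : ∀ᶠ a in l, 0 < n a)
    (hδ : Tendsto δ l (𝓝 0))
    (hyd : ∀ᶠ a in l, ∀ i ∈ s a,
      0 ≤ y a i ∧ y a i ≤ n a * δ a ∧ n a * (1 - δ a) ≤ d a i ∧ d a i ≤ n a)
    (hsum : Tendsto (fun a => (∑ i ∈ s a, y a i) / n a) l (𝓝 L)) :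
    Tendsto (fun a => ∏ i ∈ s a, (1 + y a i / d a i)) l (𝓝 (exp L)) := by
  have hgood : ∀ᶠ a in l, 0 < n a ∧ δ a < 1 := hn.and (hδ.eventually_lt_const one_pos)
  have hx : ∀ᶠ a in l, ∀ i ∈ s a, 0 ≤ y a i / d a i ∧ y a i / d a i ≤ δ a / (1 - δ a) := by
    filter_upwards [hgood, hyd] with a ⟨hn0, hδ1⟩ ha i hi
    obtain ⟨hy0, hy_up, hd_low, -⟩ := ha i hi
    refine ⟨div_nonneg hy0 (by nlinarith), ?_⟩
    calc y a i / d a i ≤ n a * δ a / (n a * (1 - δ a)) :=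
          div_le_div₀ (by nlinarith) hy_up (by nlinarith) hd_low
      _ = δ a / (1 - δ a) := mul_div_mul_left _ _ hn0.ne'
  have hM : Tendsto (fun a => δ a / (1 - δ a)) l (𝓝 0) := by
    have h : Tendsto (fun a => δ a / (1 - δ a)) l (𝓝 (0 / (1 - 0))) :=
      hδ.div (tendsto_const_nhds.sub hδ) (by norm_num)
    rwa [zero_div] at h
  have hup : Tendsto (fun a => (∑ i ∈ s a, y a i) / n a / (1 - δ a)) l (𝓝 (L / (1 - 0))) :=
    hsum.div (tendsto_const_nhds.sub hδ) (by norm_num)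
  rw [sub_zero, div_one] at hup
  refine tendsto_prod_one_add_of_tendsto_sum hx hM
    (tendsto_of_tendsto_of_tendsto_of_le_of_le' hsum hup ?_ ?_)
  · filter_upwards [hgood, hyd] with a ⟨hn0, hδ1⟩ ha
    rw [sum_div]
    refine sum_le_sum fun i hi => ?_
    obtain ⟨hy0, -, hd_low, hd_up⟩ := ha i hi
    exact div_le_div_of_nonneg_left hy0 (by nlinarith) hd_up
  · filter_upwards [hgood, hyd] with a ⟨hn0, hδ1⟩ ha
    rw [div_div, sum_div]
    refine sum_le_sum fun i hi => ?_
    obtain ⟨hy0, -, hd_low, -⟩ := ha i hi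
    exact div_le_div_of_nonneg_left hy0 (by nlinarith) hd_low

section

variable {α : Type*} {l : Filter α} {m : α → ℕ} {n : α → ℝ} {ℓ : ℝ}

theorem tendsto_sum_range_div_of_tendsto_sq_div {f : ℕ → ℝ} {c : ℝ}
    (hf : Tendsto (fun k : ℕ => f k / k) atTop (𝓝 c)) (hm : Tendsto m l atTop)
    (hmn : Tendsto (fun a => (m a : ℝ) ^ 2 / n a) l (𝓝 ℓ)) :
    Tendsto (fun a => (∑ k ∈ range (m a), f k) / n a) l (𝓝 (ℓ * c / 2)) := by
  have := ((tendsto_sum_range_div_sq hf).comp hm).mul hmn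
  rw [div_mul_eq_mul_div, mul_comm] at this
  refine this.congr' ?_
  filter_upwards [hm.eventually_ne_atTop 0] with a ha
  simp only [Function.comp_apply]
  field_simp

theorem tendsto_add_one_div_of_tendsto_sq_div {S : ℕ → ℝ} {μ : ℝ}
    (hS : Tendsto (fun k : ℕ => S k / k) atTop (𝓝 μ)) (hm : Tendsto m l atTop)
    (hn : Tendsto n l atTop) (hmn : Tendsto (fun a => (m a : ℝ) ^ 2 / n a) l (𝓝 ℓ)) :
    Tendsto (fun a => (S (m a) + 1) / n a) l (𝓝 0) := by
  have hSm : Tendsto (fun a => S (m a) / m a * ((m a : ℝ) ^ 2 / n a) * (m a : ℝ)⁻¹) l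
      (𝓝 (μ * ℓ * 0)) :=
    ((hS.comp hm).mul hmn).mul (tendsto_inv_atTop_nhds_zero_nat.comp hm)
  rw [mul_zero] at hSm
  have := hSm.add hn.inv_tendsto_atTop
  rw [add_zero] at this
  refine this.congr' ?_
  filter_upwards [hm.eventually_ne_atTop 0] with a ha
  simp only [Pi.inv_apply, add_div, one_div]
  field_simp

theorem tendsto_prod_sub_div_sub {S : ℕ → ℝ} {μ : ℝ}
    (hS_mono : Monotone S) (hS_ge : ∀ k : ℕ, (k : ℝ) ≤ S k)
    (hS : Tendsto (fun k : ℕ => S k / k) atTop (𝓝 μ)) (hm : Tendsto m l atTop)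
    (hn : Tendsto n l atTop) (hmn : Tendsto (fun a => (m a : ℝ) ^ 2 / n a) l (𝓝 ℓ)) :
    Tendsto (fun a => ∏ k ∈ range (m a), (n a - k) / (n a - 1 - S k)) l
      (𝓝 (exp (ℓ * (μ - 1) / 2))) := by
  set δ : α → ℝ := fun a => (S (m a) + 1) / n a
  have hδ : Tendsto δ l (𝓝 0) := tendsto_add_one_div_of_tendsto_sq_div hS hm hn hmn
  have hf : Tendsto (fun k : ℕ => (S k - k + 1) / k) atTop (𝓝 (μ - 1 + 0)) := by
    refine (hS.sub_const 1).add tendsto_inv_atTop_nhds_zero_nat |>.congr' ?_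
    filter_upwards [eventually_ne_atTop 0] with k hk
    field_simp
  rw [add_zero] at hf
  have hn0 : ∀ᶠ a in l, 0 < n a := hn.eventually_gt_atTop 0
  have hterm : ∀ᶠ a in l, ∀ k ∈ range (m a), 0 ≤ S k - k + 1 ∧ S k - k + 1 ≤ n a * δ a ∧
      n a * (1 - δ a) ≤ n a - 1 - S k ∧ n a - 1 - S k ≤ n a := by
    filter_upwards [hn0] with a ha k hk
    have hkm : S k ≤ S (m a) := hS_mono (mem_range.1 hk).le
    have hδn : n a * δ a = S (m a) + 1 := mul_div_cancel₀ _ ha.ne'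
    have := hS_ge k
    refine ⟨?_, ?_, ?_, ?_⟩ <;> nlinarith [(k.cast_nonneg : (0 : ℝ) ≤ k)]
  refine (tendsto_prod_one_add_div hn0 hδ hterm
    (tendsto_sum_range_div_of_tendsto_sq_div hf hm hmn)).congr' ?_
  filter_upwards [hn0, hδ.eventually_lt_const one_pos, hterm] with a hna hδ1 ha
  refine prod_congr rfl fun k hk => ?_
  obtain ⟨-, -, hd_low, -⟩ := ha k hk
  have hd : n a - 1 - S k ≠ 0 := (lt_of_lt_of_le (by nlinarith) hd_low).ne'
  field_simp
  ring

end

theorem tendsto_natFloor_mul_sqrt_atTop {t : ℝ} (ht : 0 < t) :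
    Tendsto (fun x : ℝ => ⌊t * √x⌋₊) atTop atTop :=
  tendsto_nat_floor_atTop.comp (tendsto_sqrt_atTop.const_mul_atTop ht)

theorem tendsto_natFloor_mul_sqrt_sq_div {t : ℝ} (ht : 0 < t) :
    Tendsto (fun x : ℝ => (⌊t * √x⌋₊ : ℝ) ^ 2 / x) atTop (𝓝 (t ^ 2)) := by
  have h := ((tendsto_nat_floor_div_atTop.comp
    (tendsto_sqrt_atTop.const_mul_atTop ht)).pow 2).mul_const (t ^ 2)
  rw [one_pow, one_mul] at h
  refine h.congr' ?_
  filter_upwards [eventually_gt_atTop 0] with x hx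
  simp only [Function.comp_apply, div_pow, mul_pow, sq_sqrt hx.le]
  field_simp

theorem tendstoInMeasure_of_tendsto_ae_of_isCountablyGenerated {ι Ω E : Type*}
    [MeasurableSpace Ω] {P : Measure Ω} [IsFiniteMeasure P] [PseudoEMetricSpace E]
    {l : Filter ι} [l.IsCountablyGenerated] {f : ι → Ω → E} {g : Ω → E}
    (hf : ∀ i, AEStronglyMeasurable (f i) P)
    (hfg : ∀ᵐ ω ∂P, Tendsto (fun i => f i ω) l (𝓝 (g ω))) : TendstoInMeasure P f l g := by
  intro ε hε
  rw [tendsto_iff_seq_tendsto]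
  intro u hu
  exact tendstoInMeasure_of_tendsto_ae (fun k => hf (u k))
    (by filter_upwards [hfg] with ω hω using hω.comp hu) ε hε

lemma prod_Icc_one_eq_prod_range {M : Type*} [CommMonoid M] (f : ℕ → M) (m : ℕ) :
    ∏ i ∈ Icc 1 m, f i = ∏ k ∈ range m, f (k + 1) := by
  rw [range_eq_Ico, prod_Ico_add' f 0 m 1]
  rfl

theorem strong_law_ae_sum_Icc {Ω : Type*} [MeasurableSpace Ω] {P : Measure Ω}
    {X : ℕ → Ω → ℝ} (hint : Integrable (X 1) P) (hindep : iIndepFun X P)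
    (hident : ∀ i, IdentDistrib (X i) (X 1) P P) :
    ∀ᵐ ω ∂P, Tendsto (fun k : ℕ => (∑ j ∈ Icc 1 k, X j ω) / k) atTop (𝓝 P[X 1]) := by
  filter_upwards [strong_law_ae_real (fun j => X (j + 1)) hint
    (fun i j hij => hindep.indepFun (by simpa using hij)) (fun i => hident (i + 1))] with ω hω
  refine hω.congr fun k => ?_
  rw [range_eq_Ico, sum_Ico_add' (fun j => X j ω) 0 k 1]
  rfl

theorem stmt10_general {Ω : Type*} [MeasurableSpace Ω] (P : Measure Ω) [IsProbabilityMeasure P]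
    (ξ : ℕ → Ω → ℕ) (hmeas : ∀ i, Measurable (ξ i))
    (hindep : iIndepFun ξ P)
    (hident : ∀ i, IdentDistrib (ξ i) (ξ 1) P P)
    (hpos : ∀ i ω, 1 ≤ ξ i ω) (σ : ℝ)
    (hint : Integrable (fun ω => (ξ 1 ω : ℝ)) P)
    (hmean : ∫ ω, (ξ 1 ω : ℝ) ∂P = 1 + σ ^ 2)
    (t : ℝ) (ht : 0 < t) :
    TendstoInMeasure P
      (fun n ω => ∏ i ∈ Finset.Icc 1 ⌊t * Real.sqrt n⌋₊,
        ((n : ℝ) - (i : ℝ) + 1) / ((n : ℝ) - 1 - ∑ j ∈ Finset.Icc 1 (i - 1), (ξ j ω : ℝ)))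
      atTop (fun _ => Real.exp (t ^ 2 * σ ^ 2 / 2)) := by
  have hLLN : ∀ᵐ ω ∂P, Tendsto (fun k : ℕ => (∑ j ∈ Icc 1 k, (ξ j ω : ℝ)) / k) atTop
      (𝓝 (1 + σ ^ 2)) := by
    rw [← hmean]
    exact strong_law_ae_sum_Icc hint (hindep.comp _ fun _ => measurable_from_top)
      fun i => (hident i).comp measurable_from_top
  refine tendstoInMeasure_of_tendsto_ae_of_isCountablyGenerated
    (fun x => Measurable.aestronglyMeasurable (by fun_prop)) ?_
  filter_upwards [hLLN] with ω hω
  have hS_mono : Monotone fun k => ∑ j ∈ Icc 1 k, (ξ j ω : ℝ) := fun k k' hk =>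
    sum_le_sum_of_subset_of_nonneg (Icc_subset_Icc_right hk) fun j _ _ => (ξ j ω).cast_nonneg
  have hS_ge (k : ℕ) : (k : ℝ) ≤ ∑ j ∈ Icc 1 k, (ξ j ω : ℝ) := by
    simpa using card_nsmul_le_sum (Icc 1 k) (fun j => (ξ j ω : ℝ)) 1
      fun j _ => Nat.one_le_cast.2 (hpos j ω)
  have := tendsto_prod_sub_div_sub hS_mono hS_ge hω (tendsto_natFloor_mul_sqrt_atTop ht)
    tendsto_id (tendsto_natFloor_mul_sqrt_sq_div ht)
  convert this using 2 with x
  · rw [prod_Icc_one_eq_prod_range]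
    refine prod_congr rfl fun k _ => ?_
    rw [Nat.add_sub_cancel, Nat.cast_add_one, id]
    ring
  · ring_nf

/-- **Convergence in probability of the size-biased correction product.**
Let `ξ̄₁, ξ̄₂, …` be i.i.d. random variables with values in `{1,2,…}` and finite
mean `1 + σ²`, `σ² > 0`, and let `t > 0`.  Then
`∏_{i=1}^{⌊t√n⌋} (n − i + 1)/(n − 1 − ∑_{j=1}^{i−1} ξ̄_j) → exp(t²σ²/2)`
in probability as `n → ∞`. -/
theorem stmt10 {Ω : Type*} [MeasurableSpace Ω] (P : Measure Ω) [IsProbabilityMeasure P]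
    (ξ : ℕ → Ω → ℕ) (hmeas : ∀ i, Measurable (ξ i))
    (hindep : iIndepFun ξ P)
    (hident : ∀ i, IdentDistrib (ξ i) (ξ 1) P P)
    (hpos : ∀ i ω, 1 ≤ ξ i ω) (σ : ℝ) (hσ : 0 < σ)
    (hint : Integrable (fun ω => (ξ 1 ω : ℝ)) P)
    (hmean : ∫ ω, (ξ 1 ω : ℝ) ∂P = 1 + σ ^ 2)
    (t : ℝ) (ht : 0 < t) :
    TendstoInMeasure P
      (fun n ω => ∏ i ∈ Finset.Icc 1 ⌊t * Real.sqrt n⌋₊,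
        ((n : ℝ) - (i : ℝ) + 1) / ((n : ℝ) - 1 - ∑ j ∈ Finset.Icc 1 (i - 1), (ξ j ω : ℝ)))
      atTop (fun _ => Real.exp (t ^ 2 * σ ^ 2 / 2)) :=
  stmt10_general P ξ hmeas hindep hident hpos σ hint hmean t ht
end

section
/- Let (ξ̄, Y) be such that ξ̄ is a positive-integer-valued random variable and conditionally on ξ̄ = k, Y = (Y_{k,1},…,Y_{k,k}) is a random vector in ℝᵏ; let U be uniform on [ξ̄] independent of Y given ξ̄. Assume E[Y_{ξ̄,U}] = 0, E[Y_{ξ̄,U}²] = β² < ∞, and that there exists c > 0 with P(max_{1≤i≤ξ̄}|Y_{ξ̄,i}| > y) ≤ c·y^{−2(4−η)/3} for all y > 0, where η ∈ [0,2). Fix δ ∈ (0, 1/(4−η)) and set τₙ = n^{1/(4−η)−δ}. Define the truncated variable Y^{n,δ}_{ξ̄,U} = Y_{ξ̄,U}·1{max_{1≤i≤ξ̄}|Y_{ξ̄,i}| ≤ τₙ}. Then |E[Y^{n,δ}_{ξ̄,U}]| = O(τₙ^{1 − 2(4−η)/3}), and Var(Y^{n,δ}_{ξ̄,U}) → β²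 as n → ∞. -/
/-!
Centering turns the truncated mean `E[Z; M ≤ τ]` into `-E[Z; M > τ]`, and since `|Z| ≤ M`,
`|E[Z; M > τ]| ≤ τ P(M > τ) + E[(M - τ)⁺]`. By the layer-cake formula
`E[(M - τ)⁺] = ∫_τ^∞ P(M > y) dy`, so the tail bound `P(M > y) ≤ c y^{-a}` with `a > 1` makes
both terms `O(τ^{1-a})`. As `τₙ → ∞`, the truncated first and second moments converge to
`E[Z] = 0` and `E[Z²] = β²` by dominated convergence.
-/

open MeasureTheory Filter Set Topology

theorem integral_Ioi_const_mul_rpow_neg {a τ : ℝ} (c : ℝ) (ha : 1 < a) (hτ : 0 < τ) :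
    ∫ y in Ioi τ, c * y ^ (-a) = c / (a - 1) * τ ^ (1 - a) := by
  rw [integral_const_mul, integral_Ioi_rpow_of_lt (by linarith) hτ, neg_add_eq_sub,
    neg_div, ← div_neg, neg_sub]
  ring

section Tail

variable {Ω : Type*} [MeasurableSpace Ω] {μ : Measure Ω} [IsFiniteMeasure μ]
  {Z M : Ω → ℝ} {a c τ : ℝ}

theorem lintegral_max_sub_le_of_tail (hM : Measurable M) (hc : 0 ≤ c) (ha : 1 < a) (hτ : 0 < τ)
    (htail : ∀ y : ℝ, 0 < y → (μ {ω | y < M ω}).toReal ≤ c * y ^ (-a)) :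
    ∫⁻ ω, ENNReal.ofReal (max (M ω - τ) 0) ∂μ ≤ ENNReal.ofReal (c / (a - 1) * τ ^ (1 - a)) := by
  have hmeas : Measurable fun ω => max (M ω - τ) 0 := by fun_prop
  have hlevel : ∀ t ∈ Ioi (0 : ℝ), {ω | t < max (M ω - τ) 0} = {ω | t + τ < M ω} := by
    intro t ht
    ext ω
    simp only [mem_ofPred_eq, lt_max_iff, mem_Ioi] at ht ⊢
    constructor
    · rintro (h | h) <;> linarith
    · intro h; left; linarith
  have hshift := (measurePreserving_add_right volume τ).setLIntegral_comp_emb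
    (measurableEmbedding_addRight τ) (fun y => ENNReal.ofReal (c * y ^ (-a))) (Ioi 0)
  rw [image_add_const_Ioi, zero_add] at hshift
  calc ∫⁻ ω, ENNReal.ofReal (max (M ω - τ) 0) ∂μ
      = ∫⁻ t in Ioi 0, μ {ω | t + τ < M ω} := by
        rw [lintegral_eq_lintegral_meas_lt μ (ae_of_all _ fun ω => le_max_right (M ω - τ) 0)
          hmeas.aemeasurable]
        exact setLIntegral_congr_fun measurableSet_Ioi fun t ht => by rw [hlevel t ht]
    _ ≤ ∫⁻ t in Ioi 0, ENNReal.ofReal (c * (t + τ) ^ (-a)) := by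
        refine setLIntegral_mono' measurableSet_Ioi fun t ht => ?_
        rw [← ENNReal.ofReal_toReal (measure_ne_top μ _)]
        exact ENNReal.ofReal_le_ofReal (htail _ (by linarith [mem_Ioi.mp ht]))
    _ = ∫⁻ y in Ioi τ, ENNReal.ofReal (c * y ^ (-a)) := hshift
    _ = ENNReal.ofReal (c / (a - 1) * τ ^ (1 - a)) := by
        rw [← ofReal_integral_eq_lintegral_ofReal
          ((integrableOn_Ioi_rpow_of_lt (by linarith) hτ).const_mul c),
          integral_Ioi_const_mul_rpow_neg c ha hτ]
        filter_upwards [self_mem_ae_restrict measurableSet_Ioi] with y hy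
        exact mul_nonneg hc (Real.rpow_nonneg (hτ.trans hy).le _)

theorem integrable_max_sub_of_tail (hM : Measurable M) (hc : 0 ≤ c) (ha : 1 < a) (hτ : 0 < τ)
    (htail : ∀ y : ℝ, 0 < y → (μ {ω | y < M ω}).toReal ≤ c * y ^ (-a)) :
    Integrable (fun ω => max (M ω - τ) 0) μ := by
  refine ⟨by fun_prop, ?_⟩
  rw [hasFiniteIntegral_iff_ofReal (ae_of_all _ fun ω => le_max_right (M ω - τ) 0)]
  exact (lintegral_max_sub_le_of_tail hM hc ha hτ htail).trans_lt ENNReal.ofReal_lt_top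

theorem integral_max_sub_le_of_tail (hM : Measurable M) (hc : 0 ≤ c) (ha : 1 < a) (hτ : 0 < τ)
    (htail : ∀ y : ℝ, 0 < y → (μ {ω | y < M ω}).toReal ≤ c * y ^ (-a)) :
    ∫ ω, max (M ω - τ) 0 ∂μ ≤ c / (a - 1) * τ ^ (1 - a) := by
  rw [integral_eq_lintegral_of_nonneg_ae (ae_of_all _ fun ω => le_max_right (M ω - τ) 0)
    (by fun_prop)]
  refine ENNReal.toReal_le_of_le_ofReal ?_ (lintegral_max_sub_le_of_tail hM hc ha hτ htail)
  have : 0 < a - 1 := by linarith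
  positivity

theorem abs_setIntegral_tail_le (hM : Measurable M) (hZM : ∀ ω, |Z ω| ≤ M ω)
    (hZ : Integrable Z μ) (hc : 0 ≤ c) (ha : 1 < a) (hτ : 0 < τ)
    (htail : ∀ y : ℝ, 0 < y → (μ {ω | y < M ω}).toReal ≤ c * y ^ (-a)) :
    |∫ ω in {ω | τ < M ω}, Z ω ∂μ| ≤ (c + c / (a - 1)) * τ ^ (1 - a) := by
  have hexcess := integrable_max_sub_of_tail hM hc ha hτ htail
  have hprob : τ * (μ {ω | τ < M ω}).toReal ≤ c * τ ^ (1 - a) := by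
    calc τ * (μ {ω | τ < M ω}).toReal ≤ τ * (c * τ ^ (-a)) := by gcongr; exact htail τ hτ
      _ = c * τ ^ (1 - a) := by rw [sub_eq_add_neg, Real.rpow_add hτ, Real.rpow_one]; ring
  calc |∫ ω in {ω | τ < M ω}, Z ω ∂μ|
      ≤ ∫ ω in {ω | τ < M ω}, |Z ω| ∂μ := abs_integral_le_integral_abs
    _ ≤ ∫ ω in {ω | τ < M ω}, (τ + max (M ω - τ) 0) ∂μ := by
        refine integral_mono hZ.abs.restrict ((integrable_const τ).add hexcess).restrict
          fun ω => ?_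
        linarith [hZM ω, le_max_left (M ω - τ) 0]
    _ = τ * (μ {ω | τ < M ω}).toReal + ∫ ω in {ω | τ < M ω}, max (M ω - τ) 0 ∂μ := by
        rw [integral_add (integrable_const τ) hexcess.restrict, setIntegral_const, smul_eq_mul,
          measureReal_def, mul_comm]
    _ ≤ c * τ ^ (1 - a) + c / (a - 1) * τ ^ (1 - a) := by
        gcongr
        exact (setIntegral_le_integral hexcess (ae_of_all _ fun ω => le_max_right _ _)).trans
          (integral_max_sub_le_of_tail hM hc ha hτ htail)
    _ = (c + c / (a - 1)) * τ ^ (1 - a) := by ring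

theorem abs_setIntegral_truncation_le (hM : Measurable M) (hZM : ∀ ω, |Z ω| ≤ M ω)
    (hZ : Integrable Z μ) (hcenter : ∫ ω, Z ω ∂μ = 0) (hc : 0 ≤ c) (ha : 1 < a) (hτ : 0 < τ)
    (htail : ∀ y : ℝ, 0 < y → (μ {ω | y < M ω}).toReal ≤ c * y ^ (-a)) :
    |∫ ω in {ω | M ω ≤ τ}, Z ω ∂μ| ≤ (c + c / (a - 1)) * τ ^ (1 - a) := by
  have hcompl : {ω | M ω ≤ τ}ᶜ = {ω | τ < M ω} := by ext; simp
  have hsplit := integral_add_compl (measurableSet_le hM (measurable_const (a := τ))) hZ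
  rw [hcenter, hcompl, add_eq_zero_iff_eq_neg] at hsplit
  rw [hsplit, abs_neg]
  exact abs_setIntegral_tail_le hM hZM hZ hc ha hτ htail

end Tail

theorem tendsto_setIntegral_le_of_tendsto_atTop {Ω ι : Type*} [MeasurableSpace Ω]
    {μ : Measure Ω} {l : Filter ι} [l.IsCountablyGenerated] {M g : Ω → ℝ} {τ : ι → ℝ}
    (hM : Measurable M) (hg : Integrable g μ) (hτ : Tendsto τ l atTop) :
    Tendsto (fun i => ∫ ω in {ω | M ω ≤ τ i}, g ω ∂μ) l (𝓝 (∫ ω, g ω ∂μ)) := by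
  have hmeas : ∀ i, MeasurableSet {ω | M ω ≤ τ i} := fun i => measurableSet_le hM measurable_const
  simp_rw [← integral_indicator (hmeas _)]
  refine tendsto_integral_filter_of_dominated_convergence (fun ω => ‖g ω‖)
    (Eventually.of_forall fun i => hg.aestronglyMeasurable.indicator (hmeas i))
    (Eventually.of_forall fun i => ae_of_all _ fun ω => norm_indicator_le_norm_self g ω)
    hg.norm (ae_of_all _ fun ω => tendsto_const_nhds.congr' ?_)
  filter_upwards [hτ.eventually_ge_atTop (M ω)] with i hi
  exact (indicator_of_mem (show ω ∈ {ω | M ω ≤ τ i} from hi) g).symm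

theorem stmt14_general {Ω : Type*} [MeasurableSpace Ω] (P : Measure Ω) [IsProbabilityMeasure P]
    (Z M : Ω → ℝ) (hM : Measurable M)
    (hZM : ∀ ω, |Z ω| ≤ M ω)
    (hint1 : Integrable Z P) (hcenter : ∫ ω, Z ω ∂P = 0)
    (hint2 : Integrable (fun ω => Z ω ^ 2) P) (β : ℝ) (hβ : ∫ ω, Z ω ^ 2 ∂P = β ^ 2)
    (η : ℝ) (hη2 : η < 2)
    (c : ℝ) (hc : 0 < c)
    (htail : ∀ y : ℝ, 0 < y → (P {ω | y < M ω}).toReal ≤ c * y ^ (-(2 * (4 - η) / 3)))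
    (δ : ℝ) (hδ1 : δ < 1 / (4 - η)) :
    (∃ C : ℝ, 0 < C ∧ ∀ n : ℕ, 1 ≤ n →
      |∫ ω in {ω | M ω ≤ (n : ℝ) ^ (1 / (4 - η) - δ)}, Z ω ∂P|
        ≤ C * ((n : ℝ) ^ (1 / (4 - η) - δ)) ^ (1 - 2 * (4 - η) / 3)) ∧
    Tendsto (fun n : ℕ =>
        (∫ ω in {ω | M ω ≤ (n : ℝ) ^ (1 / (4 - η) - δ)}, Z ω ^ 2 ∂P)
          - (∫ ω in {ω | M ω ≤ (n : ℝ) ^ (1 / (4 - η) - δ)}, Z ω ∂P) ^ 2)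
      atTop (nhds (β ^ 2)) := by
  have ha : 1 < 2 * (4 - η) / 3 := by linarith
  have hp : 0 < 1 / (4 - η) - δ := by linarith
  have hτ : Tendsto (fun n : ℕ => (n : ℝ) ^ (1 / (4 - η) - δ)) atTop atTop :=
    (tendsto_rpow_atTop hp).comp tendsto_natCast_atTop_atTop
  refine ⟨⟨c + c / (2 * (4 - η) / 3 - 1), by have := sub_pos.mpr ha; positivity,
    fun n hn => abs_setIntegral_truncation_le hM hZM hint1 hcenter hc.le ha
      (Real.rpow_pos_of_pos (by exact_mod_cast hn) _) htail⟩, ?_⟩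
  have hmean := tendsto_setIntegral_le_of_tendsto_atTop hM hint1 hτ
  have hsecond := tendsto_setIntegral_le_of_tendsto_atTop hM hint2 hτ
  rw [hcenter] at hmean
  rw [hβ] at hsecond
  simpa using hsecond.sub (hmean.pow 2)

/-- **Moments of the truncated displacement.**
Let `Z = Y_{ξ̄,U}` be the displacement of a uniform child of a size-biased vertex and
`M = max_{1≤i≤ξ̄}|Y_{ξ̄,i}|` (so `|Z| ≤ M`).  Assume the global centering `E[Z] = 0`,
the global variance `E[Z²] = β² < ∞` and the tail bound
`P(M > y) ≤ c·y^{−2(4−η)/3}` for all `y > 0`, with `η ∈ [0,2)`.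
Fix `δ ∈ (0, 1/(4−η))` and set `τₙ = n^{1/(4−η)−δ}`.  Then for the truncation
`Zₙ = Z·1{M ≤ τₙ}`: `|E[Zₙ]| = O(τₙ^{1 − 2(4−η)/3})` and `Var(Zₙ) → β²`. -/
theorem stmt14 {Ω : Type*} [MeasurableSpace Ω] (P : Measure Ω) [IsProbabilityMeasure P]
    (Z M : Ω → ℝ) (hZ : Measurable Z) (hM : Measurable M)
    (hZM : ∀ ω, |Z ω| ≤ M ω)
    (hint1 : Integrable Z P) (hcenter : ∫ ω, Z ω ∂P = 0)
    (hint2 : Integrable (fun ω => Z ω ^ 2) P) (β : ℝ) (hβ : ∫ ω, Z ω ^ 2 ∂P = β ^ 2)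
    (η : ℝ) (hη0 : 0 ≤ η) (hη2 : η < 2)
    (c : ℝ) (hc : 0 < c)
    (htail : ∀ y : ℝ, 0 < y → (P {ω | y < M ω}).toReal ≤ c * y ^ (-(2 * (4 - η) / 3)))
    (δ : ℝ) (hδ0 : 0 < δ) (hδ1 : δ < 1 / (4 - η)) :
    (∃ C : ℝ, 0 < C ∧ ∀ n : ℕ, 1 ≤ n →
      |∫ ω in {ω | M ω ≤ (n : ℝ) ^ (1 / (4 - η) - δ)}, Z ω ∂P|
        ≤ C * ((n : ℝ) ^ (1 / (4 - η) - δ)) ^ (1 - 2 * (4 - η) / 3)) ∧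
    Tendsto (fun n : ℕ =>
        (∫ ω in {ω | M ω ≤ (n : ℝ) ^ (1 / (4 - η) - δ)}, Z ω ^ 2 ∂P)
          - (∫ ω in {ω | M ω ≤ (n : ℝ) ^ (1 / (4 - η) - δ)}, Z ω ∂P) ^ 2)
      atTop (nhds (β ^ 2)) :=
  stmt14_general P Z M hM hZM hint1 hcenter hint2 β hβ η hη2 c hc htail δ hδ1
end

section
/- Fix n, r, s ∈ ℤ_{≥0} with r, s < n and d₁,…,d_r ∈ ℕ with Σᵢdᵢ = s. Let μ be a distribution on ℤ_{≥0} with finite positive mean, let X_{r+1},…,Xₙ be i.i.d. μ, set Z⃗ = (d₁,…,d_r,X_{r+1},…,Xₙ), and conditionally on Z⃗ let Σ be the size-biased random reordering permutation of Z⃗. Let N = |{i ∈ {r+1,…,n} : Xᵢ > 0}| and τ_r(Σ) = min{j : Σ(j) ∈ [r]} (or n+1 if r = 0). Let X̄₁, X̄₂, … be i.i.d. samples from the size-biased law of μ. Then for any m ∈ [n−r] and any f : ℕᵐ → ℝ, provided P(X_{r+1}+…+Xₙ = n−1−s) > 0: E[f(Z_{Σ(1)},…,Z_{Σ(m)})·1{N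 ≥ m}·1{τ_r(Σ) > m} | X_{r+1}+…+Xₙ = n−1−s] = E[f(X̄₁,…,X̄ₘ)·Θ(X̄₁,…,X̄ₘ)], where Θ(k₁,…,kₘ) = [P(X_{m+1}+…+X_{n−r} = n−1−s−Σᵢkᵢ)/P(X₁+…+X_{n−r} = n−1−s)]·(E[X₁])ᵐ·∏_{i=1}^{m}(n−r−i+1)/(n−1−Σ_{j<i}k_j) when Σᵢkᵢ ≤ n−1−s, and Θ = 0 otherwise. -/
/-!
Conditionally on `Z⃗`, the first `m` positions of the size-biased reordering are a size-biased
sample without replacement: summing the permutation weight over everything after position `m`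
telescopes, because at each step the masses still available add up to the mass still unused.
On the event that the `r` fixed entries are avoided and `X_{r+1} + ⋯ + Xₙ = n − 1 − s`, the
sample is an injective tuple `u` of free coordinates, drawn with probability
`∏ᵢ x_{u i} / (n − 1 − ∑_{j<i} x_{u j})`, the total mass being `s + (n − 1 − s) = n − 1`.
Splitting `x` into `x ∘ u` and the remaining `n − r − m` coordinates, each of the `(n − r)ₘ`
tuples `u` contributes the same sum over `x ∘ u = k`, and rewriting `μ (kᵢ)` through the
size-biased law gives the factor `Θ`.
-/

noncomputable section
open Classical Finset

namespace SizeBiased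

def embeddingSnocEquiv (l : ℕ) (γ : Type*) :
    (Σ v : Fin l ↪ γ, {a // a ∉ Set.range v}) ≃ (Fin (l + 1) ↪ γ) where
  toFun p := Fin.Embedding.snoc p.1 p.2.2
  invFun w := ⟨Fin.Embedding.init w, w (Fin.last l), by
    rintro ⟨t, ht⟩
    exact (Fin.castSucc_lt_last t).ne (w.injective ht)⟩
  left_inv p := Sigma.subtype_ext (Fin.Embedding.init_snoc _ _) Fin.Embedding.snoc_last
  right_inv w := by
    ext i
    induction i using Fin.lastCases
    · simp
    · simp only [Fin.Embedding.coe_snoc, Fin.snoc_castSucc]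
      rfl

section Embeddings

variable {γ : Type*} [Fintype γ] [DecidableEq γ]

theorem sum_embedding_succ {M : Type*} [AddCommMonoid M] {l : ℕ} (F : (Fin (l + 1) ↪ γ) → M) :
    ∑ w, F w = ∑ v : Fin l ↪ γ, ∑ a : {a // a ∉ Set.range v}, F (Fin.Embedding.snoc v a.2) := by
  rw [← (embeddingSnocEquiv l γ).sum_comp, Fintype.sum_sigma]
  rfl

theorem sum_compl_range_embedding {l : ℕ} (ζ : γ → ℝ) (v : Fin l ↪ γ) :
    ∑ a : {a // a ∉ Set.range v}, ζ a = ∑ a, ζ a - ∑ t, ζ (v t) := by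
  rw [← Finset.sum_subtype (univ.map v)ᶜ (by simp) ζ, eq_sub_iff_add_eq,
    ← sum_map univ v ζ, sum_compl_add_sum]

theorem sum_embedding_mul_comp_castLE (W : ∀ l, (Fin l → γ) → ℝ) (c : ℕ → ℝ) {m L : ℕ}
    (hmL : m ≤ L)
    (hW : ∀ l < L, ∀ v : Fin l ↪ γ,
      ∑ a : {a // a ∉ Set.range v}, W (l + 1) (Fin.snoc v a) = c l * W l v)
    (H : (Fin m → γ) → ℝ) :
    ∑ w : Fin L ↪ γ, W L w * H (w ∘ Fin.castLE hmL) =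
      (∏ l ∈ Ico m L, c l) * ∑ v : Fin m ↪ γ, W m v * H v := by
  induction hmL using Nat.decreasingInduction with
  | self => simp [Fin.castLE_rfl]
  | of_succ m hm ih =>
    calc ∑ w : Fin L ↪ γ, W L w * H (w ∘ Fin.castLE hm.le)
        = ∑ w : Fin L ↪ γ, W L w * (fun u => H (u ∘ Fin.castSucc)) (w ∘ Fin.castLE hm) := rfl
      _ = (∏ l ∈ Ico (m + 1) L, c l) *
            ∑ v : Fin m ↪ γ, ∑ a : {a // a ∉ Set.range v}, W (m + 1) (Fin.snoc v a) * H v := by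
          rw [ih (fun u => H (u ∘ Fin.castSucc)), sum_embedding_succ]
          simp [Fin.snoc_comp_castSucc]
      _ = (∏ l ∈ Ico m L, c l) * ∑ v : Fin m ↪ γ, W m v * H v := by
          simp_rw [← sum_mul, hW m hm, prod_eq_prod_Ico_succ_bot hm, mul_sum]
          ring_nf

theorem sum_perm_comp_castLE {n k : ℕ} (hk : k ≤ n) (H : (Fin k → Fin n) → ℝ) :
    ∑ σ : Equiv.Perm (Fin n), H (σ ∘ Fin.castLE hk) =
      ((n - k).factorial : ℝ) * ∑ w : Fin k ↪ Fin n, H w := by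
  have hcount : ∀ l < n, ∀ v : Fin l ↪ Fin n,
      ∑ _a : {a // a ∉ Set.range v}, (1 : ℝ) = ((n - l : ℕ) : ℝ) * 1 := by
    intro l _ v
    rw [sum_const, card_univ, Fintype.card_subtype_compl, Set.card_range_of_injective v.injective,
      Fintype.card_fin, Fintype.card_fin, nsmul_eq_mul]
  have hfact : ∏ l ∈ Ico k n, ((n - l : ℕ) : ℝ) = ((n - k).factorial : ℝ) := by
    rw [prod_Ico_eq_prod_range, ← Nat.cast_prod, ← Nat.descFactorial_self,
      Nat.descFactorial_eq_prod_range]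
    refine congrArg Nat.cast (prod_congr rfl fun i _ => ?_)
    omega
  have key := sum_embedding_mul_comp_castLE (fun _ _ => 1) (fun l => ((n - l : ℕ) : ℝ)) hk hcount H
  rw [hfact] at key
  simp only [one_mul] at key
  rw [← key]
  exact Fintype.sum_equiv (Equiv.embeddingEquivOfFinite (Fin n)).symm _ _ fun σ => rfl

end Embeddings

theorem sum_embedding_ite_forall_mem_range {β γ : Type*} [Fintype β] [Fintype γ] [DecidableEq γ]
    {m : ℕ} (e : β ↪ γ) (F : (Fin m → γ) → ℝ) :
    ∑ w : Fin m ↪ γ, (if ∀ t, w t ∈ Set.range e then F w else 0) =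
      ∑ u : Fin m ↪ β, F (e ∘ u) := by
  let post : (Fin m ↪ β) ↪ (Fin m ↪ γ) :=
    ⟨fun u => u.trans e, fun u u' h => by
      ext t
      exact e.injective (congrArg (fun w : Fin m ↪ γ => w t) h)⟩
  have himage : univ.map post = ({w | ∀ t, w t ∈ Set.range e} : Finset (Fin m ↪ γ)) := by
    ext w
    simp only [mem_map, mem_univ, true_and, mem_filter]
    constructor
    · rintro ⟨u, rfl⟩ t
      exact ⟨u t, rfl⟩
    · intro h
      refine ⟨(w.codRestrict _ h).trans
        (Equiv.ofInjective e e.injective).symm.toEmbedding, ?_⟩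
      ext t
      exact Equiv.apply_ofInjective_symm e.injective ⟨w t, h t⟩
  rw [← sum_filter, ← himage, sum_map]
  rfl

def seqOf {m : ℕ} (a : Fin m → ℝ) (i : ℕ) : ℝ := if h : i < m then a ⟨i, h⟩ else 0

/-- The probability that size-biased sampling without replacement, from masses of total `S`,
draws the masses `a 0, a 1, …, a (m - 1)` in this order. -/
def sizeBiasedWeight (S : ℝ) {m : ℕ} (a : Fin m → ℝ) : ℝ :=
  ∏ i ∈ range m, seqOf a i / (S - ∑ j ∈ range i, seqOf a j)

theorem seqOf_comp_castLE {m N : ℕ} (a : Fin N → ℝ) (h : m ≤ N) {i : ℕ} (hi : i < m) :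
    seqOf (a ∘ Fin.castLE h) i = seqOf a i := by
  simp [seqOf, hi, hi.trans_le h]

theorem seqOf_snoc_of_lt {m : ℕ} (a : Fin m → ℝ) (b : ℝ) {i : ℕ} (hi : i < m) :
    seqOf (Fin.snoc a b : Fin (m + 1) → ℝ) i = seqOf a i := by
  simp [seqOf, hi, Fin.snoc, Nat.lt_succ_of_lt hi]

theorem sum_range_seqOf {m : ℕ} (a : Fin m → ℝ) : ∑ j ∈ range m, seqOf a j = ∑ t, a t := by
  rw [← Fin.sum_univ_eq_sum_range]
  simp [seqOf]

theorem sizeBiasedWeight_snoc (S : ℝ) {m : ℕ} (a : Fin m → ℝ) (b : ℝ) :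
    sizeBiasedWeight S (Fin.snoc a b : Fin (m + 1) → ℝ) =
      sizeBiasedWeight S a * (b / (S - ∑ t, a t)) := by
  have hprefix : ∀ i ≤ m, ∑ j ∈ range i, seqOf (Fin.snoc a b : Fin (m + 1) → ℝ) j =
      ∑ j ∈ range i, seqOf a j := fun i hi =>
    sum_congr rfl fun j hj => seqOf_snoc_of_lt a b ((mem_range.1 hj).trans_le hi)
  rw [sizeBiasedWeight, prod_range_succ, hprefix m le_rfl, sum_range_seqOf]
  congr 1
  · exact prod_congr rfl fun i hi => by
      rw [seqOf_snoc_of_lt a b (mem_range.1 hi), hprefix i (mem_range.1 hi).le]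
  · simp [seqOf, Fin.snoc]

theorem sizeBiasedWeight_eq_zero {S : ℝ} {m : ℕ} {a : Fin m → ℝ} (t : Fin m) (h : a t = 0) :
    sizeBiasedWeight S a = 0 :=
  prod_eq_zero (mem_range.2 t.2) (by simp [seqOf, h])

theorem prod_div_sum_Ico_eq_sizeBiasedWeight {N : ℕ} (a : Fin N → ℝ) (S : ℝ)
    (hS : (∀ t, a t ≠ 0) → ∑ t, a t = S) :
    ∏ i ∈ range N, seqOf a i / ∑ j ∈ Ico i N, seqOf a j = sizeBiasedWeight S a := by
  by_cases ha : ∀ t, a t ≠ 0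
  · refine prod_congr rfl fun i hi => ?_
    rw [sum_Ico_eq_sub _ (mem_range.1 hi).le, sum_range_seqOf, hS ha]
  · obtain ⟨t, ht⟩ := _root_.not_forall_not.mp ha
    rw [sizeBiasedWeight_eq_zero t ht]
    exact prod_eq_zero (mem_range.2 t.2) (by simp [seqOf, ht])

theorem descFactorial_mul_prod_mul_sizeBiasedWeight {q m : ℕ} (hm : m ≤ q) (S : ℝ) {c : ℝ}
    (hc : c ≠ 0) (a ν : Fin m → ℝ) :
    (q.descFactorial m : ℝ) * (∏ t, ν t) * sizeBiasedWeight S a =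
      (∏ t, a t * ν t / c) * c ^ m *
        ∏ i ∈ range m, ((q : ℝ) - i) / (S - ∑ j ∈ range i, seqOf a j) := by
  rw [Nat.descFactorial_eq_prod_range, Nat.cast_prod, sizeBiasedWeight,
    ← Fin.prod_univ_eq_prod_range (fun i => ((q - i : ℕ) : ℝ)),
    ← Fin.prod_univ_eq_prod_range (fun i => seqOf a i / (S - ∑ j ∈ range i, seqOf a j)),
    ← Fin.prod_univ_eq_prod_range (fun i => ((q : ℝ) - i) / (S - ∑ j ∈ range i, seqOf a j)),
    ← Fin.prod_const, ← prod_mul_distrib, ← prod_mul_distrib, ← prod_mul_distrib,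
    ← prod_mul_distrib]
  refine prod_congr rfl fun t _ => ?_
  rw [Nat.cast_sub (t.2.le.trans hm)]
  simp only [seqOf, t.2, dif_pos]
  field_simp

section Weights

variable {γ : Type*} [Fintype γ]

theorem sum_comp_embedding_eq_sum (ζ : γ → ℝ) (hζ : ∀ a, 0 ≤ ζ a) {N : ℕ} (w : Fin N ↪ γ)
    (hN : #{a | 0 < ζ a} ≤ N) (hw : ∀ t, ζ (w t) ≠ 0) : ∑ t, ζ (w t) = ∑ a, ζ a := by
  have himage : univ.map w = ({a | 0 < ζ a} : Finset γ) := by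
    refine eq_of_subset_of_card_le (fun a ha => ?_) (by simpa using hN)
    obtain ⟨t, -, rfl⟩ := mem_map.1 ha
    exact mem_filter.2 ⟨mem_univ _, (hζ _).lt_of_ne' (hw t)⟩
  rw [← sum_map univ w ζ, himage, sum_filter_of_ne fun a _ h => (hζ a).lt_of_ne' h]

variable [DecidableEq γ]

theorem sum_sizeBiasedWeight_snoc (ζ : γ → ℝ) {l : ℕ} (v : Fin l ↪ γ)
    (hv : ∑ a, ζ a - ∑ t, ζ (v t) ≠ 0) :
    ∑ a : {a // a ∉ Set.range v}, sizeBiasedWeight (∑ a, ζ a) (ζ ∘ Fin.snoc v a) =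
      sizeBiasedWeight (∑ a, ζ a) (ζ ∘ v) := by
  simp_rw [Fin.comp_snoc, sizeBiasedWeight_snoc, ← mul_sum, ← sum_div,
    sum_compl_range_embedding ζ v]
  rw [Function.comp_def, div_self hv, mul_one]

theorem sub_sum_comp_embedding_pos (ζ : γ → ℝ) (hζ : ∀ a, 0 ≤ ζ a) {l : ℕ} (v : Fin l ↪ γ)
    (hl : l < #{a | 0 < ζ a}) : 0 < ∑ a, ζ a - ∑ t, ζ (v t) := by
  rw [← sum_compl_range_embedding]
  have hout : ∃ a, a ∉ Set.range v ∧ 0 < ζ a := by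
    by_contra! h
    have hsub : ({a | 0 < ζ a} : Finset γ) ⊆ univ.map v := fun a ha => by
      by_contra hmem
      exact (h a (by simpa using hmem)).not_gt (mem_filter.1 ha).2
    exact hl.not_ge ((card_le_card hsub).trans_eq (by simp))
  obtain ⟨a, ha, hpos⟩ := hout
  exact sum_pos' (fun b _ => hζ b) ⟨⟨a, ha⟩, mem_univ _, hpos⟩

theorem sum_embedding_sizeBiasedWeight_comp_castLE (ζ : γ → ℝ) (hζ : ∀ a, 0 ≤ ζ a) {m N : ℕ}
    (hmN : m ≤ N) (hN : N ≤ #{a | 0 < ζ a}) (H : (Fin m → γ) → ℝ) :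
    ∑ w : Fin N ↪ γ, sizeBiasedWeight (∑ a, ζ a) (ζ ∘ w) * H (w ∘ Fin.castLE hmN) =
      ∑ v : Fin m ↪ γ, sizeBiasedWeight (∑ a, ζ a) (ζ ∘ v) * H v := by
  have := sum_embedding_mul_comp_castLE (fun _ v => sizeBiasedWeight (∑ a, ζ a) (ζ ∘ v))
    (fun _ => 1) hmN (fun l hl v => by
      rw [one_mul]
      exact sum_sizeBiasedWeight_snoc ζ v (sub_sum_comp_embedding_pos ζ hζ v (hl.trans_le hN)).ne')
    H
  simpa using this

end Weights

theorem sum_perm_sizeBiased_eq_sum_embedding {n : ℕ} (ζ : Fin n → ℝ) (hζ : ∀ a, 0 ≤ ζ a)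
    {m : ℕ} (hm : m ≤ #{a | 0 < ζ a}) (G : (Fin m → Fin n) → ℝ) :
    ∑ σ : Equiv.Perm (Fin n), 1 / ((n - #{a | 0 < ζ a}).factorial : ℝ) *
        (∏ i ∈ range #{a | 0 < ζ a},
          seqOf (ζ ∘ σ) i / ∑ j ∈ Ico i #{a | 0 < ζ a}, seqOf (ζ ∘ σ) j) *
        G (σ ∘ Fin.castLE ((hm.trans (card_le_univ _)).trans_eq (Fintype.card_fin n))) =
      ∑ w : Fin m ↪ Fin n, sizeBiasedWeight (∑ a, ζ a) (ζ ∘ w) * G w := by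
  set N := #{a | 0 < ζ a}
  have hNn : N ≤ n := (card_le_univ _).trans_eq (Fintype.card_fin n)
  have hprod : ∀ σ : Equiv.Perm (Fin n),
      ∏ i ∈ range N, seqOf (ζ ∘ σ) i / ∑ j ∈ Ico i N, seqOf (ζ ∘ σ) j =
        sizeBiasedWeight (∑ a, ζ a) ((ζ ∘ σ) ∘ Fin.castLE hNn) := fun σ => by
    rw [← prod_div_sum_Ico_eq_sizeBiasedWeight ((ζ ∘ σ) ∘ Fin.castLE hNn) _
      (sum_comp_embedding_eq_sum ζ hζ ((Fin.castLEEmb hNn).trans σ.toEmbedding) le_rfl)]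
    refine prod_congr rfl fun i hi => ?_
    have hiN := mem_range.1 hi
    rw [seqOf_comp_castLE _ _ hiN]
    congr 1
    exact sum_congr rfl fun j hj => (seqOf_comp_castLE _ _ (mem_Ico.1 hj).2).symm
  have hfact : ((n - N).factorial : ℝ) ≠ 0 := by positivity
  calc ∑ σ : Equiv.Perm (Fin n), 1 / ((n - N).factorial : ℝ) *
          (∏ i ∈ range N, seqOf (ζ ∘ σ) i / ∑ j ∈ Ico i N, seqOf (ζ ∘ σ) j) *
          G (σ ∘ Fin.castLE (hm.trans hNn))
      = 1 / ((n - N).factorial : ℝ) * ∑ σ : Equiv.Perm (Fin n),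
          (fun w => sizeBiasedWeight (∑ a, ζ a) (ζ ∘ w) * G (w ∘ Fin.castLE hm))
            (σ ∘ Fin.castLE hNn) := by
        rw [mul_sum]
        exact sum_congr rfl fun σ _ => by rw [hprod, mul_assoc]; rfl
    _ = ∑ w : Fin N ↪ Fin n, sizeBiasedWeight (∑ a, ζ a) (ζ ∘ w) * G (w ∘ Fin.castLE hm) := by
        rw [sum_perm_comp_castLE hNn
          (fun w => sizeBiasedWeight (∑ a, ζ a) (ζ ∘ w) * G (w ∘ Fin.castLE hm)), ← mul_assoc,
          one_div_mul_cancel hfact, one_mul]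
    _ = ∑ w : Fin m ↪ Fin n, sizeBiasedWeight (∑ a, ζ a) (ζ ∘ w) * G w :=
        sum_embedding_sizeBiasedWeight_comp_castLE ζ hζ hm le_rfl G

section TupleSums

variable {m p : ℕ}

def rangeSumComplEquiv (u : Fin m ↪ Fin p) : Fin m ⊕ Fin (p - m) ≃ Fin p :=
  (Equiv.sumCongr (Equiv.ofInjective u u.injective)
      (Fintype.equivFinOfCardEq (by
        rw [Fintype.card_compl_set, Set.card_range_of_injective u.injective,
          Fintype.card_fin, Fintype.card_fin])).symm).trans
    (Equiv.Set.sumCompl (Set.range u))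

theorem rangeSumComplEquiv_inl (u : Fin m ↪ Fin p) (t : Fin m) :
    rangeSumComplEquiv u (Sum.inl t) = u t := by
  simp [rangeSumComplEquiv]

theorem summable_of_sum_ne {ι : Type*} [Fintype ι] [DecidableEq ι] {f : (ι → ℕ) → ℝ} {T : ℕ}
    (hf : ∀ x, ∑ i, x i ≠ T → f x = 0) : Summable f := by
  refine summable_of_ne_finset_zero (s := Fintype.piFinset fun _ => range (T + 1)) fun x hx => ?_
  refine hf x fun hsum => hx (Fintype.mem_piFinset.2 fun i => mem_range.2 ?_)
  exact Nat.lt_succ_of_le (hsum ▸ single_le_sum (fun j _ => Nat.zero_le (x j)) (mem_univ i))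

theorem tsum_mul_ite_sum_eq_comp_embedding (μ : ℕ → ℝ) (T : ℕ) (u : Fin m ↪ Fin p)
    (F : (Fin m → ℕ) → ℝ) :
    ∑' x : Fin p → ℕ, (∏ i, μ (x i)) * (if ∑ i, x i = T then 1 else 0) * F (x ∘ u) =
      ∑' k : Fin m → ℕ, (∏ i, μ (k i)) * F k *
        (if ∑ i, k i ≤ T then
          ∑' y : Fin (p - m) → ℕ, (∏ i, μ (y i)) * (if ∑ i, y i = T - ∑ i, k i then 1 else 0)
        else 0) := by
  set ι := rangeSumComplEquiv u
  let e : (Fin m → ℕ) × (Fin (p - m) → ℕ) ≃ (Fin p → ℕ) :=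
    (Equiv.sumArrowEquivProdArrow _ _ ℕ).symm.trans (Equiv.arrowCongr ι (Equiv.refl ℕ))
  have he_comp : ∀ k y, e (k, y) ∘ u = k := fun k y => by
    funext t
    simp [e, ← rangeSumComplEquiv_inl u t, ι]
  have he_prod : ∀ k y, ∏ i, μ (e (k, y) i) = (∏ i, μ (k i)) * ∏ i, μ (y i) := fun k y => by
    rw [← ι.prod_comp]
    simp [e, Fintype.prod_sum_type]
  have he_sum : ∀ k y, ∑ i, e (k, y) i = ∑ i, k i + ∑ i, y i := fun k y => by
    rw [← ι.sum_comp]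
    simp [e, Fintype.sum_sum_type]
  have hsummable : Summable fun x : Fin p → ℕ =>
      (∏ i, μ (x i)) * (if ∑ i, x i = T then 1 else 0) * F (x ∘ u) :=
    summable_of_sum_ne (T := T) fun x hx => by simp [hx]
  rw [← e.tsum_eq]
  refine ((e.summable_iff.2 hsummable).tsum_prod).trans (tsum_congr fun k => ?_)
  dsimp only [Function.comp_apply]
  simp only [he_comp, he_prod, he_sum]
  split_ifs with hk
  · rw [← tsum_mul_left]
    refine tsum_congr fun y => ?_
    simp_rw [show (∑ i, k i + ∑ i, y i = T) ↔ (∑ i, y i = T - ∑ i, k i) by omega]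
    ring
  · rw [mul_zero]
    refine (tsum_congr fun y => ?_).trans tsum_zero
    rw [if_neg (by omega)]
    ring

theorem tsum_mul_sum_embedding (μ : ℕ → ℝ) (T : ℕ) (F : (Fin m → ℕ) → ℝ) :
    ∑' x : Fin p → ℕ, (∏ i, μ (x i)) * (if ∑ i, x i = T then 1 else 0) *
        ∑ u : Fin m ↪ Fin p, F (x ∘ u) =
      p.descFactorial m * ∑' k : Fin m → ℕ, (∏ i, μ (k i)) * F k *
        (if ∑ i, k i ≤ T then
          ∑' y : Fin (p - m) → ℕ, (∏ i, μ (y i)) * (if ∑ i, y i = T - ∑ i, k i then 1 else 0)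
        else 0) := by
  simp_rw [mul_sum]
  rw [Summable.tsum_finsetSum fun u _ => summable_of_sum_ne (T := T) fun x hx => by simp [hx]]
  simp_rw [tsum_mul_ite_sum_eq_comp_embedding]
  rw [sum_const, card_univ, Fintype.card_embedding_eq, Fintype.card_fin, Fintype.card_fin,
    nsmul_eq_mul]

end TupleSums

theorem le_sInf_iff_forall_not {P : ℕ → Prop} (h : ∃ j, P j) {m : ℕ} :
    m ≤ sInf {j | P j} ↔ ∀ j < m, ¬ P j := by
  refine ⟨fun hm j hj => Nat.notMem_of_lt_sInf (hj.trans_le hm), fun hm => ?_⟩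
  by_contra! hlt
  exact hm _ hlt (Nat.sInf_mem h)

def tailEmb (n r : ℕ) : Fin (n - r) ↪ Fin n :=
  ⟨fun a => ⟨r + a, by have := a.2; omega⟩, fun a b h => by
    ext
    simpa using h⟩

theorem mem_range_tailEmb {n r : ℕ} {a : Fin n} : a ∈ Set.range (tailEmb n r) ↔ r ≤ (a : ℕ) := by
  constructor
  · rintro ⟨b, rfl⟩
    exact Nat.le_add_right r b
  · intro h
    refine ⟨⟨a - r, by omega⟩, Fin.ext ?_⟩
    show r + (a - r) = a
    omega

theorem lt_firstHit_iff {n r m : ℕ} (hr : r < n) (hmn : m ≤ n) (σ : Equiv.Perm (Fin n)) :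
    m < (if r = 0 then n + 1 else
      sInf {j : ℕ | (if h : j < n then (σ ⟨j, h⟩ : ℕ) else j) < r} + 1) ↔
      ∀ t : Fin m, σ (Fin.castLE hmn t) ∈ Set.range (tailEmb n r) := by
  simp only [mem_range_tailEmb]
  split_ifs with hr0
  · simp [hr0]
    omega
  · have hhit : ∃ j, (if h : j < n then (σ ⟨j, h⟩ : ℕ) else j) < r :=
      ⟨σ.symm ⟨0, by omega⟩, by simp; omega⟩
    rw [Nat.lt_succ_iff, le_sInf_iff_forall_not hhit]
    constructor
    · intro h t
      have ht := h t t.2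
      rw [dif_pos (t.2.trans_le hmn)] at ht
      exact not_lt.1 ht
    · intro h j hj
      rw [dif_pos (hj.trans_le hmn), not_lt]
      exact h ⟨j, hj⟩

theorem apply_add_of_eq_dite {n r j : ℕ} {d ζ : ℕ → ℕ} {x : Fin (n - r) → ℕ}
    (hζ : ∀ i, ζ i =
      if _h : i < r then d i else if h' : i - r < n - r then x ⟨i - r, h'⟩ else 0)
    (hj : j < n - r) : ζ (r + j) = x ⟨j, hj⟩ := by
  simp only [hζ, dif_neg (by omega : ¬ r + j < r), Nat.add_sub_cancel_left, dif_pos hj]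

theorem sum_fin_of_eq_dite {n r : ℕ} {d ζ : ℕ → ℕ} {x : Fin (n - r) → ℕ}
    (hζ : ∀ i, ζ i =
      if _h : i < r then d i else if h' : i - r < n - r then x ⟨i - r, h'⟩ else 0)
    (hrn : r ≤ n) : ∑ a : Fin n, ζ a = ∑ i ∈ range r, d i + ∑ j, x j := by
  rw [Fin.sum_univ_eq_sum_range ζ, ← sum_range_add_sum_Ico _ hrn, sum_Ico_eq_sum_range,
    ← Fin.sum_univ_eq_sum_range (fun j => ζ (r + j))]
  congr 1
  · exact sum_congr rfl fun i hi => by rw [hζ, dif_pos (mem_range.1 hi)]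
  · exact sum_congr rfl fun j _ => apply_add_of_eq_dite hζ j.2

theorem sizeBiasedWeight_comp_embedding_eq_zero {γ : Type*} [Fintype γ] {m : ℕ} (S : ℝ)
    (x : γ → ℕ) (hx : #{i | 0 < x i} < m) (u : Fin m ↪ γ) :
    sizeBiasedWeight S (fun t => (x (u t) : ℝ)) = 0 := by
  have hzero : ∃ t, x (u t) = 0 := by
    by_contra! h
    refine hx.not_ge ((by simp : m = #(univ.map u)).trans_le (card_le_card fun a ha => ?_))
    obtain ⟨t, -, rfl⟩ := mem_map.1 ha
    exact mem_filter.2 ⟨mem_univ _, Nat.pos_of_ne_zero (h t)⟩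
  obtain ⟨t, ht⟩ := hzero
  exact sizeBiasedWeight_eq_zero t (by simp [ht])

theorem perm_summand_eq {n r m : ℕ} (hr : r < n) (hmn : m ≤ n) (ζ : ℕ → ℕ)
    (σ : Equiv.Perm (Fin n)) (f : (Fin m → ℕ) → ℝ) :
    (let Nz : ℕ := #{i : Fin n | 0 < ζ i}
     let σ' : ℕ → ℕ := fun i => if h : i < n then ((σ ⟨i, h⟩ : Fin n) : ℕ) else i
     (1 / ((n - Nz).factorial : ℝ)) *
       (∏ i ∈ range Nz, (ζ (σ' i) : ℝ) / (∑ j ∈ Ico i Nz, (ζ (σ' j) : ℝ))) *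
       (if m < (if r = 0 then n + 1 else sInf {j : ℕ | σ' j < r} + 1) then 1 else 0) *
       f (fun i => ζ (σ' (i : ℕ)))) =
      1 / ((n - #{a : Fin n | 0 < (ζ a : ℝ)}).factorial : ℝ) *
        (∏ i ∈ range #{a : Fin n | 0 < (ζ a : ℝ)},
          seqOf ((fun a : Fin n => (ζ a : ℝ)) ∘ σ) i /
            ∑ j ∈ Ico i #{a : Fin n | 0 < (ζ a : ℝ)}, seqOf ((fun a : Fin n => (ζ a : ℝ)) ∘ σ) j) *
        ((if ∀ t, σ (Fin.castLE hmn t) ∈ Set.range (tailEmb n r) then 1 else 0) *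
          f (fun t => ζ (σ (Fin.castLE hmn t)))) := by
  have hseq : ∀ i < n, seqOf ((fun a : Fin n => (ζ a : ℝ)) ∘ σ) i =
      (ζ (if h : i < n then ((σ ⟨i, h⟩ : Fin n) : ℕ) else i) : ℝ) := fun i hi => by
    simp [seqOf, hi]
  have hNn : #{a : Fin n | 0 < ζ a} ≤ n := (card_le_univ _).trans_eq (Fintype.card_fin n)
  dsimp only
  simp only [Nat.cast_pos, lt_firstHit_iff hr hmn σ, mul_assoc _ _ (f _)]
  congr 2
  · refine prod_congr rfl fun i hi => ?_
    rw [hseq i ((mem_range.1 hi).trans_le hNn)]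
    exact congrArg _ (sum_congr rfl fun j hj => (hseq j ((mem_Ico.1 hj).2.trans_le hNn)).symm)
  · refine congrArg f (funext fun t => ?_)
    rw [dif_pos (t.2.trans_le hmn)]
    rfl

theorem ite_mul_sum_perm_eq_sum_embedding {n r m : ℕ} (hr : r < n) (hm : m ≤ n - r)
    (ζ : ℕ → ℕ) (x : Fin (n - r) → ℕ) (hζx : ∀ j (hj : j < n - r), ζ (r + j) = x ⟨j, hj⟩)
    (hζsum : ∑ a : Fin n, (ζ a : ℝ) = n - 1) (f : (Fin m → ℕ) → ℝ) :
    (if m ≤ #{i | 0 < x i} then 1 else 0) *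
        ∑ σ : Equiv.Perm (Fin n),
          (let Nz : ℕ := #{i : Fin n | 0 < ζ i}
           let σ' : ℕ → ℕ := fun i => if h : i < n then ((σ ⟨i, h⟩ : Fin n) : ℕ) else i
           (1 / ((n - Nz).factorial : ℝ)) *
             (∏ i ∈ range Nz, (ζ (σ' i) : ℝ) / (∑ j ∈ Ico i Nz, (ζ (σ' j) : ℝ))) *
             (if m < (if r = 0 then n + 1 else sInf {j : ℕ | σ' j < r} + 1) then 1 else 0) *
             f (fun i => ζ (σ' (i : ℕ)))) =
      ∑ u : Fin m ↪ Fin (n - r),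
        sizeBiasedWeight (n - 1) (fun t => (x (u t) : ℝ)) * f (x ∘ u) := by
  have hmn : m ≤ n := hm.trans (Nat.sub_le n r)
  have hζx' : ∀ a, ζ (tailEmb n r a) = x a := fun a => hζx a a.2
  by_cases hNx : m ≤ #{i | 0 < x i}
  · rw [if_pos hNx, one_mul]
    set ζr : Fin n → ℝ := fun a => ζ a
    have hmNz : m ≤ #{a | 0 < ζr a} := by
      refine hNx.trans (le_of_eq_of_le (card_map (tailEmb n r)).symm (card_le_card ?_))
      intro a ha
      obtain ⟨b, hb, rfl⟩ := mem_map.1 ha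
      simpa [ζr, hζx'] using (mem_filter.1 hb).2
    let G : (Fin m → Fin n) → ℝ := fun w =>
      (if ∀ t, w t ∈ Set.range (tailEmb n r) then 1 else 0) * f (fun t => ζ (w t))
    have hite : ∀ w : Fin m ↪ Fin n, sizeBiasedWeight (∑ a, ζr a) (ζr ∘ w) * G w =
        if ∀ t, w t ∈ Set.range (tailEmb n r) then
          sizeBiasedWeight (n - 1) (ζr ∘ w) * f (fun t => ζ (w t)) else 0 := fun w => by
      simp only [G, hζsum]
      split_ifs <;> ring
    have hx : ∀ u : Fin m ↪ Fin (n - r), ζr ∘ tailEmb n r ∘ u = fun t => (x (u t) : ℝ) :=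
      fun u => funext fun t => by simp [ζr, hζx']
    calc _ = ∑ σ : Equiv.Perm (Fin n), 1 / ((n - #{a | 0 < ζr a}).factorial : ℝ) *
          (∏ i ∈ range #{a | 0 < ζr a},
            seqOf (ζr ∘ σ) i / ∑ j ∈ Ico i #{a | 0 < ζr a}, seqOf (ζr ∘ σ) j) *
          G (σ ∘ Fin.castLE hmn) := sum_congr rfl fun σ _ => perm_summand_eq hr hmn ζ σ f
      _ = ∑ w : Fin m ↪ Fin n, sizeBiasedWeight (∑ a, ζr a) (ζr ∘ w) * G w :=
          sum_perm_sizeBiased_eq_sum_embedding ζr (fun _ => Nat.cast_nonneg _) hmNz G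
      _ = _ := by
          rw [sum_congr rfl fun w _ => hite w]
          refine (sum_embedding_ite_forall_mem_range (tailEmb n r)
            (fun w => sizeBiasedWeight (n - 1) (ζr ∘ w) * f (fun t => ζ (w t)))).trans
            (sum_congr rfl fun u _ => ?_)
          rw [hx u]
          exact congrArg _ (congrArg f (funext fun t => hζx' (u t)))
  · rw [if_neg hNx, zero_mul]
    refine (sum_eq_zero fun u _ => ?_).symm
    rw [sizeBiasedWeight_comp_embedding_eq_zero _ x (not_le.1 hNx) u, zero_mul]

end SizeBiased

open SizeBiased

theorem stmt16_general (n r s : ℕ) (hr : r < n) (hs : s < n)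
    (d : ℕ → ℕ) (hds : ∑ i ∈ Finset.range r, d i = s)
    (μ : ℕ → ℝ)
    (hmean : 0 < ∑' k : ℕ, (k : ℝ) * μ k)
    (m : ℕ) (hm2 : m ≤ n - r)
    (f : (Fin m → ℕ) → ℝ)
    (z : (Fin (n - r) → ℕ) → ℕ → ℕ)
    (hz : ∀ x i, z x i =
      if h : i < r then d i else if h' : i - r < n - r then x ⟨i - r, h'⟩ else 0) :
    (∑' x : Fin (n - r) → ℕ,
        (∏ i, μ (x i)) * (if (∑ i, x i) = n - 1 - s then 1 else 0) *
        (if m ≤ (Finset.univ.filter (fun i : Fin (n - r) => 0 < x i)).card then 1 else 0) *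
        (∑ σ : Equiv.Perm (Fin n),
          (let Nz : ℕ := (Finset.univ.filter (fun i : Fin n => 0 < z x (i : ℕ))).card
           let σ' : ℕ → ℕ := fun i => if h : i < n then ((σ ⟨i, h⟩ : Fin n) : ℕ) else i
           (1 / ((n - Nz).factorial : ℝ)) *
             (∏ i ∈ Finset.range Nz,
               (z x (σ' i) : ℝ) / (∑ j ∈ Finset.Ico i Nz, (z x (σ' j) : ℝ))) *
             (if m < (if r = 0 then n + 1 else sInf {j : ℕ | σ' j < r} + 1) then 1 else 0) *
             f (fun i => z x (σ' (i : ℕ))))))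
      / (∑' x : Fin (n - r) → ℕ,
          (∏ i, μ (x i)) * (if (∑ i, x i) = n - 1 - s then 1 else 0))
    = ∑' k : Fin m → ℕ,
        (∏ i, ((k i : ℝ) * μ (k i) / (∑' k' : ℕ, (k' : ℝ) * μ k'))) * f k *
        (if (∑ i, k i) ≤ n - 1 - s then
          ((∑' y : Fin (n - r - m) → ℕ,
              (∏ i, μ (y i)) * (if (∑ i, y i) = n - 1 - s - (∑ i, k i) then 1 else 0))
            / (∑' y : Fin (n - r) → ℕ,
              (∏ i, μ (y i)) * (if (∑ i, y i) = n - 1 - s then 1 else 0)))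
          * (∑' k' : ℕ, (k' : ℝ) * μ k') ^ m *
          ∏ i ∈ Finset.range m,
            ((n : ℝ) - (r : ℝ) - (i : ℝ)) /
              ((n : ℝ) - 1 - ∑ j ∈ Finset.range i,
                (if h : j < m then (k ⟨j, h⟩ : ℝ) else 0))
        else 0) := by
  have hzsum : ∀ x : Fin (n - r) → ℕ, ∑ i, x i = n - 1 - s → ∑ a : Fin n, (z x a : ℝ) = n - 1 :=
    fun x hx => by
      rw [← Nat.cast_sum, sum_fin_of_eq_dite (hz x) hr.le, hds, hx]
      push_cast [show 1 ≤ n by omega, show s ≤ n - 1 by omega]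
      ring
  let F : (Fin m → ℕ) → ℝ := fun k => sizeBiasedWeight (n - 1) (fun t => (k t : ℝ)) * f k
  rw [tsum_congr fun x => show _ = (∏ i, μ (x i)) * (if ∑ i, x i = n - 1 - s then 1 else 0) *
      ∑ u : Fin m ↪ Fin (n - r), F (x ∘ u) by
    rw [mul_assoc _ (ite _ _ _)]
    by_cases hx : ∑ i, x i = n - 1 - s
    · rw [ite_mul_sum_perm_eq_sum_embedding hr hm2 (z x) x
        (fun j hj => apply_add_of_eq_dite (hz x) hj) (hzsum x hx) f]
      rfl
    · simp [hx]]
  rw [tsum_mul_sum_embedding, ← tsum_mul_left, ← tsum_div_const]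
  refine tsum_congr fun k => ?_
  split_ifs with hk
  · have key := descFactorial_mul_prod_mul_sizeBiasedWeight hm2 (n - 1) hmean.ne'
      (fun t => (k t : ℝ)) (fun t => μ (k t))
    simp only [Nat.cast_sub hr.le, seqOf] at key
    linear_combination (f k * (∑' y : Fin (n - r - m) → ℕ,
      (∏ i, μ (y i)) * (if ∑ i, y i = n - 1 - s - ∑ i, k i then 1 else 0)) /
      ∑' y : Fin (n - r) → ℕ, (∏ i, μ (y i)) * (if ∑ i, y i = n - 1 - s then 1 else 0)) * key
  · simp

/-- **Measure change for the size-biased reordering of a partly fixed vector.**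
Fix `n, r, s` with `r, s < n` and positive `d₁,…,d_r` summing to `s`.  Let
`X_{r+1},…,Xₙ` be i.i.d. with law `μ` on ℕ (finite positive mean), put
`Z⃗ = (d₁,…,d_r, X_{r+1},…,Xₙ)`, and conditionally on `Z⃗` let `Σ` be the size-biased
random reordering permutation of `Z⃗` (law `(1/(n−N)!)·∏_{i≤N} z_{σ(i)}/∑_{j=i}^N z_{σ(j)}`
where `N` is the number of positive entries).  Let `N = |{i > r : Xᵢ > 0}|` and
`τ_r(Σ)` the first (1-indexed) position at which one of the `r` fixed entries
appears (`n+1` if `r = 0`).  Then for `m ∈ [n−r]` and any `f : ℕᵐ → ℝ`, provided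
`P(X_{r+1}+⋯+Xₙ = n−1−s) > 0`,
`E[f(Z_{Σ(1)},…,Z_{Σ(m)})·1{N ≥ m}·1{τ_r(Σ) > m} | X_{r+1}+⋯+Xₙ = n−1−s]
  = E[f(X̄₁,…,X̄ₘ)·Θ(X̄₁,…,X̄ₘ)]`
where the `X̄ᵢ` are i.i.d. size-biased samples from `μ` and `Θ` is the explicit
Radon–Nikodym factor.  All expectations are written as explicit (countable) sums. -/
theorem stmt16 (n r s : ℕ) (hr : r < n) (hs : s < n)
    (d : ℕ → ℕ) (hd : ∀ i < r, 1 ≤ d i) (hds : ∑ i ∈ Finset.range r, d i = s)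
    (μ : ℕ → ℝ) (hμ0 : ∀ k, 0 ≤ μ k) (hμ1 : ∑' k : ℕ, μ k = 1)
    (hsum : Summable (fun k : ℕ => (k : ℝ) * μ k))
    (hmean : 0 < ∑' k : ℕ, (k : ℝ) * μ k)
    (m : ℕ) (hm1 : 1 ≤ m) (hm2 : m ≤ n - r)
    (f : (Fin m → ℕ) → ℝ)
    (z : (Fin (n - r) → ℕ) → ℕ → ℕ)
    (hz : ∀ x i, z x i =
      if h : i < r then d i else if h' : i - r < n - r then x ⟨i - r, h'⟩ else 0)
    (hpos : 0 < ∑' x : Fin (n - r) → ℕ,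
        (∏ i, μ (x i)) * (if (∑ i, x i) = n - 1 - s then 1 else 0)) :
    (∑' x : Fin (n - r) → ℕ,
        (∏ i, μ (x i)) * (if (∑ i, x i) = n - 1 - s then 1 else 0) *
        (if m ≤ (Finset.univ.filter (fun i : Fin (n - r) => 0 < x i)).card then 1 else 0) *
        (∑ σ : Equiv.Perm (Fin n),
          (let Nz : ℕ := (Finset.univ.filter (fun i : Fin n => 0 < z x (i : ℕ))).card
           let σ' : ℕ → ℕ := fun i => if h : i < n then ((σ ⟨i, h⟩ : Fin n) : ℕ) else i
           (1 / ((n - Nz).factorial : ℝ)) *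
             (∏ i ∈ Finset.range Nz,
               (z x (σ' i) : ℝ) / (∑ j ∈ Finset.Ico i Nz, (z x (σ' j) : ℝ))) *
             (if m < (if r = 0 then n + 1 else sInf {j : ℕ | σ' j < r} + 1) then 1 else 0) *
             f (fun i => z x (σ' (i : ℕ))))))
      / (∑' x : Fin (n - r) → ℕ,
          (∏ i, μ (x i)) * (if (∑ i, x i) = n - 1 - s then 1 else 0))
    = ∑' k : Fin m → ℕ,
        (∏ i, ((k i : ℝ) * μ (k i) / (∑' k' : ℕ, (k' : ℝ) * μ k'))) * f k *
        (if (∑ i, k i) ≤ n - 1 - s then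
          ((∑' y : Fin (n - r - m) → ℕ,
              (∏ i, μ (y i)) * (if (∑ i, y i) = n - 1 - s - (∑ i, k i) then 1 else 0))
            / (∑' y : Fin (n - r) → ℕ,
              (∏ i, μ (y i)) * (if (∑ i, y i) = n - 1 - s then 1 else 0)))
          * (∑' k' : ℕ, (k' : ℝ) * μ k') ^ m *
          ∏ i ∈ Finset.range m,
            ((n : ℝ) - (r : ℝ) - (i : ℝ)) /
              ((n : ℝ) - 1 - ∑ j ∈ Finset.range i,
                (if h : j < m then (k ⟨j, h⟩ : ℝ) else 0))
        else 0) :=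
  stmt16_general n r s hr hs d hds μ hmean m hm2 f z hz
end
end
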